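/- arXiv:2305.19852 — 7 statements merged into one kernel-verified Lean document; each statement's English description precedes it below -/
import Mathlib

section
/- Let N ≥ 1 and let n_1 ≥ n_2 ≥ ⋯ ≥ n_N ≥ 0 be integers. Then det[ 1/Γ(n_k + j − k + 1) ]_{j,k=1}^N = Δ_N(n_1 − 1, n_2 − 2, …, n_N − N) / ∏_{j=1}^N (n_j + N − j)!, where 1/Γ denotes the entire reciprocal Gamma function, so that entries with n_k + j − k + 1 a nonpositive integer are 0. -/
open MeasureTheory Matrix Polynomial

noncomputable section

/-- The unitary group `U(N)`. -/
abbrev UG (N : ℕ) := Matrix.unitaryGroup (Fin N) ℂ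

instance UG.compactSpace (N : ℕ) : CompactSpace (UG N) := by
  have hK : IsCompact (Set.pi Set.univ (fun _ : Fin N =>
        Set.pi Set.univ fun _ : Fin N => Metric.closedBall (0 : ℂ) 1) :
      Set (Matrix (Fin N) (Fin N) ℂ)) :=
    isCompact_univ_pi fun _ => isCompact_univ_pi fun _ => isCompact_closedBall 0 1
  have hcomp : IsCompact (Matrix.unitaryGroup (Fin N) ℂ : Set (Matrix (Fin N) (Fin N) ℂ)) := by
    refine hK.of_isClosed_subset ?_ ?_
    · have heq2 : (Matrix.unitaryGroup (Fin N) ℂ : Set (Matrix (Fin N) (Fin N) ℂ)) =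
          {M | star M * M = 1} ∩ {M | M * star M = 1} := by
        ext M
        exact Iff.rfl
      rw [heq2]
      refine IsClosed.inter ?_ ?_
      · exact isClosed_eq ((continuous_id.matrix_conjTranspose).mul continuous_id) continuous_const
      · exact isClosed_eq (continuous_id.mul (continuous_id.matrix_conjTranspose)) continuous_const
    · intro M hM
      refine Set.mem_pi.mpr fun i _ => Set.mem_pi.mpr fun j _ => ?_
      simpa [Metric.mem_closedBall, Complex.dist_eq] using entry_norm_bound_of_unitary hM i j
  exact isCompact_iff_compactSpace.mp hcomp

instance UG.topologicalGroup (N : ℕ) : IsTopologicalGroup (UG N) where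
  continuous_mul := continuous_mul
  continuous_inv := by
    have h : Continuous fun u : UG N => ((u⁻¹ : UG N) : Matrix (Fin N) (Fin N) ℂ) := by
      have heq : (fun u : UG N => ((u⁻¹ : UG N) : Matrix (Fin N) (Fin N) ℂ)) =
          fun u : UG N => star (u : Matrix (Fin N) (Fin N) ℂ) := by
        funext u
        rw [← Unitary.star_eq_inv, Unitary.coe_star]
      rw [heq]
      exact continuous_subtype_val.matrix_conjTranspose
    exact continuous_induced_rng.2 h

instance UG.measurableSpace (N : ℕ) : MeasurableSpace (UG N) := borel _
instance UG.borelSpace (N : ℕ) : BorelSpace (UG N) := ⟨rfl⟩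

/-- The normalized Haar probability measure on `U(N)`. -/
def haarUG (N : ℕ) : Measure (UG N) :=
  Measure.haarMeasure (⊤ : TopologicalSpace.PositiveCompacts (UG N))



/-- The `l2` operator norm of a complex square matrix. -/
def opNorm {N : ℕ} (M : Matrix (Fin N) (Fin N) ℂ) : ℝ :=
  ‖Matrix.toEuclideanCLM (𝕜 := ℂ) M‖

/-- `det(1 + M)^α := ∏ (1 + t)^α` over the eigenvalues `t` of `M` (roots of the characteristic
polynomial, with multiplicity), using principal-branch complex powers. -/
def detOnePlusCpow {N : ℕ} (M : Matrix (Fin N) (Fin N) ℂ) (α : ℂ) : ℂ :=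
  (M.charpoly.roots.map fun t => (1 + t) ^ α).prod

/-- Kummer's confluent hypergeometric function `₁F₁(a; b; z)`. -/
def hyp1F1 (a b z : ℂ) : ℂ :=
  ∑' m : ℕ, ((ascPochhammer ℂ m).eval a / (ascPochhammer ℂ m).eval b) * z ^ m / (m.factorial : ℂ)

/-- The Gauss hypergeometric series `₂F₁(a, b; c; z)`. -/
def hyp2F1 (a b c z : ℂ) : ℂ :=
  ∑' m : ℕ, ((ascPochhammer ℂ m).eval a * (ascPochhammer ℂ m).eval b /
    (ascPochhammer ℂ m).eval c) * z ^ m / (m.factorial : ℂ)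

/-- The Vandermonde determinant `Δ_N(x) = ∏_{j < k} (x j - x k)`. -/
def vdm {N : ℕ} (x : Fin N → ℂ) : ℂ :=
  ∏ j : Fin N, ∏ k ∈ Finset.Ioi j, (x j - x k)

/-- Generalized binomial coefficient `binom(γ, k)` for complex `γ` and natural `k`. -/
def cbinom (γ : ℂ) (k : ℕ) : ℂ :=
  (∏ i ∈ Finset.range k, (γ - i)) / (k.factorial : ℂ)

/-- Generalized binomial coefficient `binom(γ, k)` for integer `k`, vanishing for `k < 0`. -/
def cbinomZ (γ : ℂ) (k : ℤ) : ℂ :=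
  if 0 ≤ k then cbinom γ k.toNat else 0

/-- `g_N(α) = ∏_{j=1}^N ((j-1)!)² Γ(α+N-j+1) / Γ(α+N)`. -/
def gNfun (N : ℕ) (α : ℂ) : ℂ :=
  ∏ j ∈ Finset.range N, ((j.factorial : ℂ)) ^ 2 * Complex.Gamma (α + N - j) /
    Complex.Gamma (α + N)

/-- The Pfaffian of a (even-sized) complex matrix,
`Pf M = (1/(2^n n!)) ∑_σ sgn σ ∏_{i=1}^n M_{σ(2i-1) σ(2i)}` where `n = m / 2`. -/
def pfaffian {m : ℕ} (M : Matrix (Fin m) (Fin m) ℂ) : ℂ :=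
  (1 / ((2 : ℂ) ^ (m / 2) * ((m / 2).factorial : ℂ))) *
    ∑ σ : Equiv.Perm (Fin m), ((Equiv.Perm.sign σ : ℤ) : ℂ) *
      ∏ i : Fin (m / 2),
        M (σ ⟨2 * i.1, by have := i.2; omega⟩) (σ ⟨2 * i.1 + 1, by have := i.2; omega⟩)

/-- The bordered `(N+1) × (N+1)` antisymmetric matrix built from `E` and `F`. -/
def borderMatrix {N : ℕ} (E : Fin N → Fin N → ℂ) (F : Fin N → ℂ) :
    Matrix (Fin (N + 1)) (Fin (N + 1)) ℂ :=
  Matrix.of fun j k =>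
    if hj : (j : ℕ) < N then
      if hk : (k : ℕ) < N then E ⟨j, hj⟩ ⟨k, hk⟩ else F ⟨j, hj⟩
    else if hk : (k : ℕ) < N then -F ⟨k, hk⟩ else 0

/-- The Hermitian matrix with diagonal `d` and upper-triangular entries `z`. -/
def hermOfParam {N : ℕ} (d : Fin N → ℝ) (z : {p : Fin N × Fin N // p.1 < p.2} → ℂ) :
    Matrix (Fin N) (Fin N) ℂ :=
  Matrix.of fun j k =>
    if h : j < k then z ⟨(j, k), h⟩
    else if h' : k < j then star (z ⟨(k, j), h'⟩)
    else (d j : ℂ)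

open scoped Classical in
/-- `Tr v(X) = ∑_j v(x_j)` where `x_j` are the eigenvalues of the Hermitian matrix `X`. -/
def trFun {N : ℕ} (v : ℝ → ℝ) (X : Matrix (Fin N) (Fin N) ℂ) : ℝ :=
  if h : X.IsHermitian then ∑ i, v (h.eigenvalues i) else 0



lemma gammaInv_eq_aux (l m : ℕ) :
    (Complex.Gamma ((l:ℂ) - (m:ℂ) + 1))⁻¹ =
      ((l.factorial : ℂ))⁻¹ * (descPochhammer ℂ m).eval (l : ℂ) := by
  rw [descPochhammer_eval_eq_descFactorial]
  rcases le_or_gt m l with h | h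
  · have h1 : (l:ℂ) - (m:ℂ) + 1 = ((l - m : ℕ):ℂ) + 1 := by push_cast [h]; ring
    rw [h1, Complex.Gamma_nat_eq_factorial]
    have h2 := Nat.factorial_mul_descFactorial h
    have hd : (l.descFactorial m : ℂ) ≠ 0 := by
      refine Nat.cast_ne_zero.mpr fun h0 => ?_
      exact absurd (Nat.descFactorial_eq_zero_iff_lt.mp h0) (not_lt.mpr h)
    have hf1 : ((l - m).factorial : ℂ) ≠ 0 := Nat.cast_ne_zero.mpr (Nat.factorial_ne_zero _)
    have hf2 : (l.factorial : ℂ) ≠ 0 := Nat.cast_ne_zero.mpr (Nat.factorial_ne_zero _)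
    field_simp
    rw [← h2]
    push_cast
    ring
  · have h1 : (l:ℂ) - (m:ℂ) + 1 = -((m - l - 1 : ℕ):ℂ) := by
      push_cast [Nat.cast_sub (by omega : 1 ≤ m - l), Nat.cast_sub (le_of_lt h)]
      ring
    rw [h1, Complex.Gamma_neg_nat_eq_zero, _root_.inv_zero,
      Nat.descFactorial_eq_zero_iff_lt.mpr h, Nat.cast_zero, mul_zero]

/-- Corollary 2.1, equivalence of (2.6) and (2.7): dimension formula via reciprocal Gammas. -/
theorem dimension_formula_gamma (N : ℕ) (hN : 1 ≤ N) (n : Fin N → ℕ) (hmono : Antitone n) :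
    (Matrix.of fun j k : Fin N =>
        (Complex.Gamma ((n k : ℂ) + ((j : ℕ) : ℂ) - ((k : ℕ) : ℂ) + 1))⁻¹).det =
      vdm (fun j => (n j : ℂ) - (((j : ℕ) : ℂ) + 1)) /
        ∏ j : Fin N, ((n j + (N - 1 - (j : ℕ))).factorial : ℂ) := by
  set l : Fin N → ℕ := fun j => n j + (N - 1 - (j : ℕ)) with hl
  have hcast : ∀ j : Fin N, ((N - 1 - (j:ℕ) : ℕ) : ℂ) = (N : ℂ) - 1 - (j : ℕ) := by
    intro j
    have hj : (j : ℕ) ≤ N - 1 := by omega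
    push_cast [Nat.cast_sub hj, Nat.cast_sub hN]
    ring
  have hx : ∀ k : Fin N, ((l k : ℕ) : ℂ) = (n k : ℂ) + (N : ℂ) - 1 - (k : ℕ) := by
    intro k; simp only [hl]; push_cast [hcast k]; ring
  have hM : (Matrix.of fun j k : Fin N =>
        (Complex.Gamma ((n k : ℂ) + ((j : ℕ) : ℂ) - ((k : ℕ) : ℂ) + 1))⁻¹) =
      Matrix.of fun j k : Fin N =>
        ((l k).factorial : ℂ)⁻¹ * (descPochhammer ℂ (N - 1 - (j:ℕ))).eval ((l k : ℕ) : ℂ) := by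
    ext j k
    have harg : (n k : ℂ) + ((j : ℕ) : ℂ) - ((k : ℕ) : ℂ) + 1 =
        ((l k : ℕ) : ℂ) - ((N - 1 - (j:ℕ) : ℕ) : ℂ) + 1 := by
      rw [hx k, hcast j]; ring
    simp only [Matrix.of_apply, harg, gammaInv_eq_aux]
  rw [hM]
  rw [show (Matrix.of fun j k : Fin N =>
        ((l k).factorial : ℂ)⁻¹ * (descPochhammer ℂ (N - 1 - (j:ℕ))).eval ((l k : ℕ) : ℂ)) =
      Matrix.of fun j k : Fin N => ((l k).factorial : ℂ)⁻¹ *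
        (Matrix.of fun j k : Fin N =>
          (descPochhammer ℂ (N - 1 - (j:ℕ))).eval ((l k : ℕ) : ℂ)) j k from rfl]
  rw [Matrix.det_mul_row]
  set x : Fin N → ℂ := fun k => ((l k : ℕ) : ℂ) with hxdef
  set B : Matrix (Fin N) (Fin N) ℂ :=
    Matrix.of fun i j : Fin N => (descPochhammer ℂ (j:ℕ)).eval ((x ∘ Fin.rev) i) with hB
  have hdetB : (Matrix.vandermonde (x ∘ Fin.rev)).det = B.det :=
    Matrix.det_eval_matrixOfPolynomials_eq_det_vandermonde (x ∘ Fin.rev)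
      (fun i => descPochhammer ℂ (i:ℕ))
      (fun i => by simp [descPochhammer_natDegree])
      (fun i => monic_descPochhammer ℂ (i:ℕ))
  have hAB : (Matrix.of fun j k : Fin N =>
        (descPochhammer ℂ (N - 1 - (j:ℕ))).eval ((l k : ℕ) : ℂ)) =
      Bᵀ.submatrix Fin.revPerm Fin.revPerm := by
    ext j k
    have hrev : ((Fin.rev j : Fin N) : ℕ) = N - 1 - (j:ℕ) := by
      rw [Fin.val_rev]; omega
    simp only [Matrix.submatrix_apply, Matrix.transpose_apply, hB, Matrix.of_apply,
      Function.comp_apply, Fin.revPerm_apply, Fin.rev_rev, hrev]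
    rfl
    
  rw [hAB, Matrix.det_submatrix_equiv_self, Matrix.det_transpose, ← hdetB,
    Matrix.det_vandermonde]
  have hv : (∏ i : Fin N, ∏ j ∈ Finset.Ioi i, ((x ∘ Fin.rev) j - (x ∘ Fin.rev) i)) =
      vdm (fun j => (n j : ℂ) - (((j : ℕ) : ℂ) + 1)) := by
    unfold vdm
    rw [Finset.prod_sigma', Finset.prod_sigma']
    refine Finset.prod_nbij' (fun p => ⟨Fin.rev p.2, Fin.rev p.1⟩)
      (fun p => ⟨Fin.rev p.2, Fin.rev p.1⟩) ?_ ?_ ?_ ?_ ?_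
    · rintro ⟨i, j⟩ hij
      simp only [Finset.mem_sigma, Finset.mem_univ, Finset.mem_Ioi, true_and] at hij ⊢
      exact Fin.rev_lt_rev.mpr hij
    · rintro ⟨i, j⟩ hij
      simp only [Finset.mem_sigma, Finset.mem_univ, Finset.mem_Ioi, true_and] at hij ⊢
      exact Fin.rev_lt_rev.mpr hij
    · rintro ⟨i, j⟩ _; simp [Fin.rev_rev]
    · rintro ⟨i, j⟩ _; simp [Fin.rev_rev]
    · rintro ⟨i, j⟩ _
      simp only [Function.comp_apply]
      rw [hxdef]
      simp only
      rw [hx, hx]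
      ring
  rw [hv, Finset.prod_inv_distrib, mul_comm, ← div_eq_mul_inv]


end
end

section
/- Let N ≥ 1, let n_1 ≥ n_2 ≥ ⋯ ≥ n_N ≥ 0 be integers, and let α ∈ ℂ be not an integer. Then det[ binom(α, n_k + j − k) ]_{j,k=1}^N = Δ_N(n_1 − 1, n_2 − 2, …, n_N − N) · ∏_{j=1}^N Γ(α + N − j + 1) / ( (n_j + N − j)! · Γ(α − n_j + j) ). -/
open MeasureTheory Matrix Polynomial

noncomputable section

private lemma Gamma_prod_aux (z : ℂ) (hz : ∀ t : ℕ, z + t ≠ 0) (b : ℕ) :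
    Complex.Gamma (z + b) = (∏ t ∈ Finset.range b, (z + t)) * Complex.Gamma z := by
  induction b with
  | zero => simp
  | succ b ih =>
    have h1 : (z + ((b:ℕ)+1 : ℕ) : ℂ) = (z + b) + 1 := by push_cast; ring
    rw [h1, Complex.Gamma_add_one _ (hz b), ih, Finset.prod_range_succ]
    ring

private lemma alpha_add_ne {α : ℂ} (hα : ∀ k : ℤ, α ≠ (k : ℂ)) (a : ℤ) : α + (a:ℂ) ≠ 0 := by
  intro h
  exact hα (-a) (by push_cast; linear_combination h)

private lemma Gamma_alpha_ne {α : ℂ} (hα : ∀ k : ℤ, α ≠ (k : ℂ)) (a : ℤ) :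
    Complex.Gamma (α + (a:ℂ)) ≠ 0 := by
  apply Complex.Gamma_ne_zero
  intro m h
  exact hα (-(m:ℤ) - a) (by push_cast; linear_combination h)

private lemma Gamma_ne' {α : ℂ} (hα : ∀ k : ℤ, α ≠ (k : ℂ)) (a : ℤ) (c : ℂ)
    (h : c = α + (a:ℂ)) : Complex.Gamma c ≠ 0 := h ▸ Gamma_alpha_ne hα a

private def Pei (α : ℂ) (N i : ℕ) : Polynomial ℂ :=
  (∏ t ∈ Finset.range i, (Polynomial.X - Polynomial.C (t:ℂ))) *
  (∏ t ∈ Finset.Ico (i+1) N, (Polynomial.C (α + t) - Polynomial.X))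

private lemma Pei_eval (α : ℂ) (N i : ℕ) (z : ℂ) :
    (Pei α N i).eval z =
      (∏ t ∈ Finset.range i, (z - t)) * (∏ t ∈ Finset.Ico (i+1) N, (α + t - z)) := by
  simp [Pei, Polynomial.eval_prod]

private lemma Pei_natDegree_lt (α : ℂ) (N i : ℕ) (hi : i < N) : (Pei α N i).natDegree < N := by
  have h1 : (∏ t ∈ Finset.range i, (Polynomial.X - Polynomial.C (t:ℂ))).natDegree ≤ i := by
    refine le_trans (Polynomial.natDegree_prod_le _ _) ?_
    calc ∑ t ∈ Finset.range i, (Polynomial.X - Polynomial.C (t:ℂ)).natDegree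
        = ∑ t ∈ Finset.range i, 1 := by
          refine Finset.sum_congr rfl fun t _ => ?_
          exact Polynomial.natDegree_X_sub_C _
      _ ≤ i := by simp
  have h2 : (∏ t ∈ Finset.Ico (i+1) N, (Polynomial.C (α + t) - Polynomial.X)).natDegree
      ≤ N - (i+1) := by
    refine le_trans (Polynomial.natDegree_prod_le _ _) ?_
    have : ∀ t ∈ Finset.Ico (i+1) N, (Polynomial.C (α + (t:ℂ)) - Polynomial.X).natDegree ≤ 1 := by
      intro t _
      refine le_trans (Polynomial.natDegree_sub_le _ _) ?_
      simp
    refine le_trans (Finset.sum_le_card_nsmul _ _ 1 this) ?_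
    simp [Nat.card_Ico]
  have := Polynomial.natDegree_mul_le
    (p := (∏ t ∈ Finset.range i, (Polynomial.X - Polynomial.C (t:ℂ))))
    (q := (∏ t ∈ Finset.Ico (i+1) N, (Polynomial.C (α + t) - Polynomial.X)))
  unfold Pei
  omega

private lemma desc_prod (m i : ℕ) (him : i ≤ m) :
    (∏ t ∈ Finset.range i, ((m:ℂ) - t)) = (m.descFactorial i : ℂ) := by
  rw [Nat.descFactorial_eq_prod_range]
  push_cast
  refine Finset.prod_congr rfl fun t ht => ?_
  rw [Nat.cast_sub (le_of_lt (lt_of_lt_of_le (Finset.mem_range.mp ht) him))]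

private lemma ico_prod_gamma {α : ℂ} (hα : ∀ k : ℤ, α ≠ (k : ℂ)) (m i N : ℕ) (hi : i < N) :
    (∏ t ∈ Finset.Ico (i+1) N, (α + t - m)) * Complex.Gamma (α - m + (i+1)) =
      Complex.Gamma (α - m + N) := by
  have hz : ∀ t : ℕ, (α - m + (i+1)) + t ≠ 0 := by
    intro t
    have := alpha_add_ne hα (-(m:ℤ) + (i+1) + t)
    intro h; apply this
    push_cast
    linear_combination h
  have := Gamma_prod_aux (α - m + (i+1)) hz (N - (i+1))
  rw [Finset.prod_Ico_eq_prod_range]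
  have he : (α - m + (i+1)) + ((N - (i+1) : ℕ) : ℂ) = α - m + N := by
    have : ((N - (i+1) : ℕ) : ℂ) = (N:ℂ) - (i+1) := by
      rw [Nat.cast_sub (by omega)]
      push_cast; ring
    rw [this]; ring
  rw [he] at this
  rw [this]
  congr 1
  refine Finset.prod_congr rfl fun t _ => ?_
  push_cast; ring

private lemma entry_eq {α : ℂ} (hα : ∀ k : ℤ, α ≠ (k : ℂ)) (N i m : ℕ) (hi : i < N) :
    cbinomZ α ((m:ℤ) - (i:ℤ)) =
      (Complex.Gamma (α+1) / ((m.factorial : ℂ) * Complex.Gamma (α - m + N))) *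
        (Pei α N i).eval (m:ℂ) := by
  rw [Pei_eval]
  by_cases him : i ≤ m
  · rw [cbinomZ, if_pos (by omega), cbinom]
    have htn : ((m:ℤ) - (i:ℤ)).toNat = m - i := by omega
    rw [htn]
    set r := m - i with hr
    have hz1 : ∀ t : ℕ, (α + 1 - r) + t ≠ 0 := by
      intro t
      have := alpha_add_ne hα (1 - (r:ℤ) + t)
      intro h; apply this; push_cast; linear_combination h
    have ha : (∏ s ∈ Finset.range r, (α - s)) * Complex.Gamma (α + 1 - r) =
        Complex.Gamma (α + 1) := by
      have := Gamma_prod_aux (α + 1 - r) hz1 r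
      have he : (α + 1 - r) + (r:ℂ) = α + 1 := by ring
      rw [he] at this
      rw [this]
      congr 1
      rw [← Finset.prod_range_reflect]
      refine Finset.prod_congr rfl fun t ht => ?_
      have htr : t < r := Finset.mem_range.mp ht
      have hc : ((r - 1 - t : ℕ):ℂ) = (r:ℂ) - 1 - t := by
        have h1 : r - 1 - t = r - (t+1) := by omega
        rw [h1, Nat.cast_sub (by omega)]
        push_cast; ring
      rw [hc]; ring
    have hb := desc_prod m i him
    have hc := ico_prod_gamma hα m i N hi
    have hGeq : Complex.Gamma (α + 1 - r) = Complex.Gamma (α - m + (i+1)) := by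
      congr 1
      rw [hr, Nat.cast_sub him]
      push_cast; ring
    have hfac : (m.factorial : ℂ) = ((m - i).factorial : ℂ) * (m.descFactorial i : ℂ) := by
      exact_mod_cast congrArg (Nat.cast (R := ℂ)) (Nat.factorial_mul_descFactorial him).symm
    have hG1ne : Complex.Gamma (α + 1 - r) ≠ 0 := by
      refine Gamma_ne' hα (1 - (r:ℤ)) _ ?_
      push_cast; ring
    have hGNne : Complex.Gamma (α - m + N) ≠ 0 := by
      refine Gamma_ne' hα ((N:ℤ) - (m:ℤ)) _ ?_
      push_cast; ring
    have hrf : ((r.factorial : ℕ) : ℂ) ≠ 0 := Nat.cast_ne_zero.mpr (Nat.factorial_ne_zero r)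
    have hmf : ((m.factorial : ℕ) : ℂ) ≠ 0 := Nat.cast_ne_zero.mpr (Nat.factorial_ne_zero m)
    rw [hb]
    have hdne : (m.descFactorial i : ℂ) ≠ 0 := by
      intro h
      rw [hfac, h, mul_zero] at hmf
      exact hmf rfl
    have hIne : (∏ t ∈ Finset.Ico (i + 1) N, (α + t - m)) ≠ 0 := by
      intro h
      rw [h, zero_mul] at hc
      exact hGNne hc.symm
    have hrfne : ((m - i).factorial : ℂ) ≠ 0 := Nat.cast_ne_zero.mpr (Nat.factorial_ne_zero _)
    rw [div_eq_iff hrf, ← ha, ← hc, hfac, ← hGeq]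
    field_simp
    ring
  · rw [cbinomZ, if_neg (by omega)]
    have hm : (m:ℕ) ∈ Finset.range i := Finset.mem_range.mpr (by omega)
    rw [Finset.prod_eq_zero hm (by simp)]
    ring

private lemma det_eval_eq (N : ℕ) (p : Fin N → Polynomial ℂ) (hdeg : ∀ j, (p j).natDegree < N)
    (x : Fin N → ℂ) :
    (Matrix.of fun j k : Fin N => (p j).eval (x k)).det =
      (Matrix.of fun j s : Fin N => (p j).coeff s).det * (Matrix.vandermonde x).det := by
  rw [← Matrix.det_transpose (Matrix.vandermonde x), ← Matrix.det_mul]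
  congr 1
  ext j k
  rw [Matrix.mul_apply]
  simp only [Matrix.of_apply, Matrix.transpose_apply, Matrix.vandermonde]
  rw [Polynomial.eval_eq_sum_range' (hdeg j), ← Fin.sum_univ_eq_sum_range]

private lemma Pei_diag {α : ℂ} (hα : ∀ k : ℤ, α ≠ (k : ℂ)) (N i : ℕ) (hi : i < N) :
    (Pei α N i).eval ((i:ℕ):ℂ) * Complex.Gamma (α+1) =
      ((i.factorial : ℕ):ℂ) * Complex.Gamma (α - i + N) := by
  rw [Pei_eval, desc_prod i i le_rfl, Nat.descFactorial_self]
  have hc := ico_prod_gamma hα i i N hi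
  have h2 : α - (i:ℂ) + ((i:ℂ)+1) = α + 1 := by ring
  rw [show α - (i:ℂ) + (↑i + 1) = α + 1 from h2] at hc
  linear_combination ((i.factorial : ℕ):ℂ) * hc

private lemma E_eq_factorials (N : ℕ) :
    (∏ i : Fin N, ∏ j ∈ Finset.Ioi i, (((j:ℕ):ℂ) - ((i:ℕ):ℂ))) =
      ∏ j : Fin N, (((j:ℕ).factorial : ℕ):ℂ) := by
  rw [Finset.prod_comm' (t' := Finset.univ) (s' := fun j => Finset.Iio j)
    (by intro x y; simp [Finset.mem_Ioi, Finset.mem_Iio, and_comm])]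
  refine Finset.prod_congr rfl fun j _ => ?_
  have hbij : ∏ i ∈ Finset.Iio j, (((j:ℕ):ℂ) - ((i:ℕ):ℂ)) =
      ∏ t ∈ Finset.range (j:ℕ), (((j:ℕ):ℂ) - (t:ℂ)) := by
    refine Finset.prod_nbij' (fun i => (i:ℕ)) (fun t => ⟨t % N, Nat.mod_lt _ (lt_of_le_of_lt (Nat.zero_le _) j.2)⟩) ?_ ?_ ?_ ?_ ?_
    · intro i hi
      exact Finset.mem_range.mpr (Fin.lt_def.mp (Finset.mem_Iio.mp hi))
    · intro t ht
      have htj : t < (j:ℕ) := Finset.mem_range.mp ht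
      refine Finset.mem_Iio.mpr ?_
      have : t % N = t := Nat.mod_eq_of_lt (lt_trans htj j.2)
      simp only [Fin.lt_def, this]
      exact htj
    · intro i hi
      have : (i:ℕ) % N = (i:ℕ) := Nat.mod_eq_of_lt i.2
      exact Fin.ext this
    · intro t ht
      have htj : t < (j:ℕ) := Finset.mem_range.mp ht
      exact Nat.mod_eq_of_lt (lt_trans htj j.2)
    · intro i hi
      rfl
  rw [hbij, desc_prod (j:ℕ) (j:ℕ) le_rfl, Nat.descFactorial_self]

private lemma cast_N1sub (N t : ℕ) (ht : t < N) : ((N - 1 - t : ℕ):ℂ) = (N:ℂ) - 1 - t := by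
  have h1 : N - 1 - t = N - (t+1) := by omega
  rw [h1, Nat.cast_sub (by omega)]
  push_cast; ring

private lemma F_reflect (N : ℕ) :
    (∏ j : Fin N, (((N-1-(j:ℕ)).factorial : ℕ):ℂ)) = ∏ j : Fin N, (((j:ℕ).factorial : ℕ):ℂ) := by
  rw [Fin.prod_univ_eq_prod_range (fun t => (((N-1-t).factorial : ℕ):ℂ)) N,
      Fin.prod_univ_eq_prod_range (fun t => ((t.factorial : ℕ):ℂ)) N]
  exact Finset.prod_range_reflect (fun t => ((t.factorial : ℕ):ℂ)) N

private lemma G_reflect (α : ℂ) (N : ℕ) :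
    (∏ j : Fin N, Complex.Gamma (α + (N:ℂ) - ((j:ℕ):ℂ))) =
      ∏ j : Fin N, Complex.Gamma (α + 1 + ((j:ℕ):ℂ)) := by
  rw [Fin.prod_univ_eq_prod_range (fun t => Complex.Gamma (α + (N:ℂ) - (t:ℂ))) N,
      Fin.prod_univ_eq_prod_range (fun t => Complex.Gamma (α + 1 + (t:ℂ))) N,
      ← Finset.prod_range_reflect (fun t => Complex.Gamma (α + 1 + (t:ℂ))) N]
  refine Finset.prod_congr rfl fun t ht => ?_
  have htN : t < N := Finset.mem_range.mp ht
  congr 1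
  rw [cast_N1sub N t htN]
  ring

private lemma detBprime {α : ℂ} (hα : ∀ k : ℤ, α ≠ (k : ℂ)) (N : ℕ) :
    (Matrix.of fun j k : Fin N =>
        (Pei α N (N-1-(j:ℕ))).eval (((N-1-(k:ℕ) : ℕ)):ℂ)).det * Complex.Gamma (α+1)^N =
      (∏ j : Fin N, (((N-1-(j:ℕ)).factorial : ℕ):ℂ)) *
        ∏ j : Fin N, Complex.Gamma (α + 1 + ((j:ℕ):ℂ)) := by
  have htri : (Matrix.of fun j k : Fin N =>
      (Pei α N (N-1-(j:ℕ))).eval (((N-1-(k:ℕ) : ℕ)):ℂ)).BlockTriangular OrderDual.toDual := by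
    intro j k hjk
    have hjk' : (j:ℕ) < (k:ℕ) := Fin.lt_def.mp hjk
    simp only [Matrix.of_apply]
    rw [Pei_eval]
    have hmem : (N-1-(k:ℕ)) ∈ Finset.range (N-1-(j:ℕ)) :=
      Finset.mem_range.mpr (by have := k.2; omega)
    rw [Finset.prod_eq_zero hmem (by simp)]
    ring
  rw [Matrix.det_of_lowerTriangular _ htri]
  have hpow : Complex.Gamma (α+1)^N = ∏ _j : Fin N, Complex.Gamma (α+1) := by
    simp
  rw [hpow, ← Finset.prod_mul_distrib, ← Finset.prod_mul_distrib]
  refine Finset.prod_congr rfl fun j _ => ?_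
  have hij : N - 1 - (j:ℕ) < N := by have := j.2; omega
  have hd := Pei_diag hα N (N-1-(j:ℕ)) hij
  rw [Matrix.of_apply, hd]
  congr 2
  rw [cast_N1sub N (j:ℕ) j.2]
  ring

/-- Corollary 2.1, equivalence of (2.6) and (2.8): dimension formula via binomial coefficients. -/
theorem dimension_formula_binomial (N : ℕ) (hN : 1 ≤ N) (n : Fin N → ℕ) (hmono : Antitone n)
    (α : ℂ) (hα : ∀ k : ℤ, α ≠ (k : ℂ)) :
    (Matrix.of fun j k : Fin N =>
        cbinomZ α ((n k : ℤ) + ((j : ℕ) : ℤ) - ((k : ℕ) : ℤ))).det =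
      vdm (fun j => (n j : ℂ) - (((j : ℕ) : ℂ) + 1)) *
        ∏ j : Fin N, (Complex.Gamma (α + (N : ℂ) - ((j : ℕ) : ℂ)) /
          (((n j + (N - 1 - (j : ℕ))).factorial : ℂ) *
            Complex.Gamma (α - (n j : ℂ) + ((j : ℕ) : ℂ) + 1))) := by
  classical
  set m : Fin N → ℕ := fun k => n k + (N - 1 - (k:ℕ)) with hm
  set p : Fin N → Polynomial ℂ := fun j => Pei α N (N - 1 - (j:ℕ)) with hp
  set x : Fin N → ℂ := fun k => ((m k : ℕ) : ℂ) with hx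
  set y : Fin N → ℂ := fun k => ((N - 1 - (k:ℕ) : ℕ) : ℂ) with hy
  set γv : Fin N → ℂ := fun k =>
    Complex.Gamma (α+1) / (((m k).factorial : ℂ) * Complex.Gamma (α - (m k) + N)) with hγ
  have hdeg : ∀ j : Fin N, (p j).natDegree < N := fun j =>
    Pei_natDegree_lt α N _ (by have := j.2; omega)
  have hM : (Matrix.of fun j k : Fin N =>
      cbinomZ α ((n k : ℤ) + ((j:ℕ):ℤ) - ((k:ℕ):ℤ))) =
      Matrix.of (fun j k => γv k * (Matrix.of fun j' k' : Fin N => (p j').eval (x k')) j k) := by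
    ext j k
    simp only [Matrix.of_apply]
    have harg : (n k : ℤ) + ((j:ℕ):ℤ) - ((k:ℕ):ℤ) = ((m k : ℕ):ℤ) - ((N - 1 - (j:ℕ) : ℕ):ℤ) := by
      have hj := j.2; have hk := k.2
      simp only [hm]
      omega
    rw [harg]
    exact entry_eq hα N (N - 1 - (j:ℕ)) (m k) (by have := j.2; omega)
  rw [hM, Matrix.det_mul_row]
  set B := Matrix.of fun j k : Fin N => (p j).eval (x k) with hB
  set B' := Matrix.of fun j k : Fin N => (p j).eval (y k) with hB'
  have h2 : B.det * (Matrix.vandermonde y).det = B'.det * (Matrix.vandermonde x).det := by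
    rw [hB, hB', det_eval_eq N p hdeg x, det_eval_eq N p hdeg y]; ring
  have h3 : B'.det * Complex.Gamma (α+1)^N =
      (∏ j : Fin N, (((N-1-(j:ℕ)).factorial : ℕ):ℂ)) *
        ∏ j : Fin N, Complex.Gamma (α + 1 + ((j:ℕ):ℂ)) := detBprime hα N
  set E : ℂ := ∏ i : Fin N, ∏ j ∈ Finset.Ioi i, (((j:ℕ):ℂ) - ((i:ℕ):ℂ)) with hE
  have hcastm : ∀ k : Fin N, x k = (n k : ℂ) + (N:ℂ) - 1 - ((k:ℕ):ℂ) := by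
    intro k
    show ((n k + (N - 1 - (k:ℕ)) : ℕ):ℂ) = _
    rw [Nat.cast_add, cast_N1sub N _ k.2]
    ring
  have hcasty : ∀ k : Fin N, y k = (N:ℂ) - 1 - ((k:ℕ):ℂ) := fun k => cast_N1sub N _ k.2
  have h4 : (Matrix.vandermonde x).det * E =
      vdm (fun j => (n j : ℂ) - (((j:ℕ):ℂ) + 1)) * (Matrix.vandermonde y).det := by
    rw [Matrix.det_vandermonde, Matrix.det_vandermonde, vdm, hE,
      ← Finset.prod_mul_distrib, ← Finset.prod_mul_distrib]
    refine Finset.prod_congr rfl fun i _ => ?_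
    rw [← Finset.prod_mul_distrib, ← Finset.prod_mul_distrib]
    refine Finset.prod_congr rfl fun j _ => ?_
    rw [hcastm j, hcastm i, hcasty j, hcasty i]
    ring
  have h5 : E = ∏ j : Fin N, (((N-1-(j:ℕ)).factorial : ℕ):ℂ) := by
    rw [hE, E_eq_factorials, ← F_reflect]
  have h6 : (∏ j : Fin N, (Complex.Gamma (α + (N : ℂ) - ((j : ℕ) : ℂ)) /
          (((n j + (N - 1 - (j : ℕ))).factorial : ℂ) *
            Complex.Gamma (α - (n j : ℂ) + ((j : ℕ) : ℂ) + 1)))) * Complex.Gamma (α+1)^N =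
      (∏ j : Fin N, Complex.Gamma (α + 1 + ((j:ℕ):ℂ))) * ∏ i, γv i := by
    have hγeq : ∀ j : Fin N, γv j =
        Complex.Gamma (α+1) / (((n j + (N - 1 - (j : ℕ))).factorial : ℂ) *
          Complex.Gamma (α - (n j : ℂ) + ((j:ℕ):ℂ) + 1)) := by
      intro j
      simp only [hγ, hm]
      rw [show α - ((n j + (N - 1 - (j:ℕ)) : ℕ):ℂ) + (N:ℂ) =
        α - (n j:ℂ) + ((j:ℕ):ℂ) + 1 from by rw [Nat.cast_add, cast_N1sub N _ j.2]; ring]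
    rw [Finset.prod_div_distrib, Finset.prod_congr rfl (fun j _ => hγeq j),
      Finset.prod_div_distrib, G_reflect α N]
    have hgne : Complex.Gamma (α+1) ≠ 0 := Gamma_ne' hα 1 _ (by norm_num)
    rw [Finset.prod_const, Finset.card_univ, Fintype.card_fin]
    ring
  have hVy : (Matrix.vandermonde y).det ≠ 0 := by
    rw [Matrix.det_vandermonde_ne_zero_iff]
    intro k1 k2 hkk
    have hcc : ((N - 1 - (k1:ℕ) : ℕ):ℂ) = ((N - 1 - (k2:ℕ) : ℕ):ℂ) := hkk
    have hnn : (N - 1 - (k1:ℕ) : ℕ) = (N - 1 - (k2:ℕ) : ℕ) := Nat.cast_injective hcc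
    have h1 := k1.2; have h2 := k2.2
    exact Fin.ext (by omega)
  have hgne : Complex.Gamma (α+1) ≠ 0 := Gamma_ne' hα 1 _ (by norm_num)
  have hEne : E ≠ 0 := by
    rw [h5]
    exact Finset.prod_ne_zero_iff.mpr fun j _ =>
      Nat.cast_ne_zero.mpr (Nat.factorial_ne_zero _)
  refine mul_right_cancel₀ (b := (Matrix.vandermonde y).det * (Complex.Gamma (α+1)^N * E))
    (mul_ne_zero hVy (mul_ne_zero (pow_ne_zero _ hgne) hEne)) ?_
  linear_combination ((∏ i, γv i) * Complex.Gamma (α+1)^N * E) * h2 +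
    ((∏ i, γv i) * (Matrix.vandermonde x).det * E) * h3 +
    ((∏ j : Fin N, Complex.Gamma (α + 1 + ((j:ℕ):ℂ))) * (∏ i, γv i) *
      (∏ j : Fin N, (((N-1-(j:ℕ)).factorial : ℕ):ℂ))) * h4 +
    (-((∏ j : Fin N, Complex.Gamma (α + 1 + ((j:ℕ):ℂ))) * (∏ i, γv i) *
      vdm (fun j => (n j : ℂ) - (((j:ℕ):ℂ) + 1)) * (Matrix.vandermonde y).det)) * h5 +
    (-(vdm (fun j => (n j : ℂ) - (((j:ℕ):ℂ) + 1)) * (Matrix.vandermonde y).det * E)) * h6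


end
end

section
/- Let N ≥ 1 and let a, b : {1,…,N} × ℤ → ℂ be such that Σ_{m∈ℤ} |a_{j,m}|·|b_{k,m}| < ∞ for all j,k, and such that Σ over all strictly decreasing integer tuples m_1 > m_2 > ⋯ > m_N of |det[a_{j,m_k}]_{j,k}|·|det[b_{j,m_k}]_{j,k}| converges. Then Σ_{m_1 > m_2 > ⋯ > m_N, m_i ∈ ℤ} det[ a_{j,m_k} ]_{j,k=1}^N · det[ b_{j,m_k} ]_{j,k=1}^N = det[ Σ_{m∈ℤ} a_{j,m} b_{k,m} ]_{j,k=1}^N. -/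
open MeasureTheory Matrix Polynomial

noncomputable section

noncomputable section

open Finset

/-- tsum of products over a pi type. -/
lemma pi_prod_summable_tsum : ∀ (n : ℕ) (g : Fin n → ℤ → ℂ),
    (∀ i, Summable fun m => ‖g i m‖) →
    Summable (fun m : Fin n → ℤ => ‖∏ i, g i (m i)‖) ∧
    (∑' m : Fin n → ℤ, ∏ i, g i (m i)) = ∏ i, ∑' m, g i m := by
  intro n
  induction n with
  | zero =>
    intro g _
    haveI : Unique (Fin 0 → ℤ) := ⟨⟨fun i => i.elim0⟩, fun f => funext fun i => i.elim0⟩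
    haveI : Finite (Fin 0 → ℤ) := Finite.of_subsingleton
    constructor
    · exact Summable.of_finite
    · simp [tsum_eq_single (default : Fin 0 → ℤ)
        (fun b hb => absurd (Subsingleton.elim b default) hb)]
  | succ n IH =>
    intro g hg
    set g' : Fin n → ℤ → ℂ := fun i => g i.succ with hg'
    obtain ⟨IH1, IH2⟩ := IH g' (fun i => hg i.succ)
    set e : (ℤ × (Fin n → ℤ)) ≃ (Fin (n+1) → ℤ) := Fin.consEquiv (fun _ => ℤ) with he
    have hkey : ∀ p : ℤ × (Fin n → ℤ),
        ∏ i, g i (e p i) = g 0 p.1 * ∏ i, g' i (p.2 i) := by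
      intro p
      rw [Fin.prod_univ_succ]
      simp [he, hg', Fin.consEquiv]
    have hmul : Summable fun p : ℤ × (Fin n → ℤ) =>
        ‖g 0 p.1 * ∏ i, g' i (p.2 i)‖ :=
      Summable.mul_norm (f := g 0) (g := fun m : Fin n → ℤ => ∏ i, g' i (m i)) (hg 0) IH1
    have hsum : Summable (fun m : Fin (n+1) → ℤ => ‖∏ i, g i (m i)‖) := by
      rw [← e.summable_iff]
      refine hmul.congr fun p => ?_
      simp [Function.comp, hkey p]
    refine ⟨hsum, ?_⟩
    rw [Fin.prod_univ_succ, IH2.symm,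
      tsum_mul_tsum_of_summable_norm (f := g 0)
        (g := fun m : Fin n → ℤ => ∏ i, g' i (m i)) (hg 0) IH1, ← e.tsum_eq]
    exact tsum_congr fun p => (hkey p)

end

noncomputable section
open Finset

lemma strictAnti_eq_of_image_eq {N : ℕ} {f g : Fin N → ℤ} (hf : StrictAnti f)
    (hg : StrictAnti g) (h : image f univ = image g univ) : f = g := by
  have hcard : (image f univ).card = N := by
    rw [card_image_of_injective _ hf.injective, card_univ, Fintype.card_fin]
  have hfm : StrictMono (fun i : Fin N => f i.rev) :=
    fun i j hij => hf (Fin.rev_lt_rev.mpr hij)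
  have hgm : StrictMono (fun i : Fin N => g i.rev) :=
    fun i j hij => hg (Fin.rev_lt_rev.mpr hij)
  have h1 : (fun i : Fin N => f i.rev) = (image f univ).orderEmbOfFin hcard :=
    orderEmbOfFin_unique hcard (fun x => mem_image_of_mem f (mem_univ _)) hfm
  have h2 : (fun i : Fin N => g i.rev) = (image f univ).orderEmbOfFin hcard :=
    orderEmbOfFin_unique hcard
      (fun x => h ▸ mem_image_of_mem g (mem_univ _)) hgm
  funext i
  have := congrFun (h1.trans h2.symm) i.rev
  simpa [Fin.rev_rev] using this

/-- Every injective tuple is uniquely a permutation of a strictly decreasing tuple. -/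
def antiPermEquiv (N : ℕ) :
    ({m : Fin N → ℤ // StrictAnti m} × Equiv.Perm (Fin N)) ≃
      {m : Fin N → ℤ // Function.Injective m} := by
  refine Equiv.ofBijective
    (fun p => ⟨p.1.1 ∘ p.2, p.1.2.injective.comp p.2.injective⟩) ⟨?_, ?_⟩
  · rintro ⟨⟨f, hf⟩, σ⟩ ⟨⟨g, hg⟩, τ⟩ hfg
    have hval : f ∘ σ = g ∘ τ := congrArg Subtype.val hfg
    have himσ : image (f ∘ σ) univ = image f univ := by
      ext x
      simp only [mem_image, mem_univ, true_and, Function.comp_apply]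
      exact ⟨fun ⟨i, hi⟩ => ⟨σ i, hi⟩, fun ⟨i, hi⟩ => ⟨σ.symm i, by simpa using hi⟩⟩
    have himτ : image (g ∘ τ) univ = image g univ := by
      ext x
      simp only [mem_image, mem_univ, true_and, Function.comp_apply]
      exact ⟨fun ⟨i, hi⟩ => ⟨τ i, hi⟩, fun ⟨i, hi⟩ => ⟨τ.symm i, by simpa using hi⟩⟩
    have him : image f univ = image g univ := by rw [← himσ, hval, himτ]
    have hfgeq : f = g := strictAnti_eq_of_image_eq hf hg him
    subst hfgeq
    have hστ : σ = τ := Equiv.ext fun k => hf.injective (congrFun hval k)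
    simp [hστ]
  · rintro ⟨m, hm⟩
    set s : Finset ℤ := image m univ with hs
    have hcard : s.card = N := by
      rw [hs, card_image_of_injective _ hm, card_univ, Fintype.card_fin]
    set m₀ : Fin N → ℤ := fun k => s.orderEmbOfFin hcard k.rev with hm₀
    have hanti : StrictAnti m₀ := fun i j hij =>
      (s.orderEmbOfFin hcard).strictMono (Fin.rev_lt_rev.mpr hij)
    have hmem : ∀ k, m₀ k ∈ s := fun k => s.orderEmbOfFin_mem hcard _
    have hcard' : Fintype.card (Fin N) = Fintype.card s := by
      rw [Fintype.card_coe, hcard, Fintype.card_fin]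
    let e₁ : Fin N ≃ s := Equiv.ofBijective
      (fun k => (⟨m k, mem_image_of_mem m (mem_univ k)⟩ : s))
      ((Fintype.bijective_iff_injective_and_card _).mpr
        ⟨fun x y hxy => hm (congrArg Subtype.val hxy), hcard'⟩)
    let e₂ : Fin N ≃ s := Equiv.ofBijective
      (fun k => (⟨m₀ k, hmem k⟩ : s))
      ((Fintype.bijective_iff_injective_and_card _).mpr
        ⟨fun x y hxy => hanti.injective (congrArg Subtype.val hxy), hcard'⟩)
    refine ⟨⟨⟨m₀, hanti⟩, e₁.trans e₂.symm⟩, ?_⟩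
    refine Subtype.ext (funext fun k => ?_)
    have h1 : e₂ (e₂.symm (e₁ k)) = e₁ k := e₂.apply_symm_apply (e₁ k)
    have h2 := congrArg Subtype.val h1
    simpa [e₁, e₂, Equiv.ofBijective] using h2

end

noncomputable section
open Finset

/-- Determinant of the sampled matrix. -/
def AD (N : ℕ) (a : Fin N → ℤ → ℂ) (m : Fin N → ℤ) : ℂ :=
  (Matrix.of fun j k : Fin N => a j (m k)).det

/-- The basic summand. -/
def FF (N : ℕ) (a b : Fin N → ℤ → ℂ) (m : Fin N → ℤ) : ℂ :=
  AD N a m * ∏ k, b k (m k)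

lemma AD_expand (N : ℕ) (a : Fin N → ℤ → ℂ) (m : Fin N → ℤ) :
    AD N a m = ∑ σ : Equiv.Perm (Fin N),
      ((Equiv.Perm.sign σ : ℤ) : ℂ) * ∏ k, a (σ k) (m k) := by
  rw [AD, Matrix.det_apply]
  exact Finset.sum_congr rfl fun σ _ => by
    simp [Units.smul_def, zsmul_eq_mul]

lemma AD_expand' (N : ℕ) (b : Fin N → ℤ → ℂ) (m : Fin N → ℤ) :
    AD N b m = ∑ σ : Equiv.Perm (Fin N),
      ((Equiv.Perm.sign σ : ℤ) : ℂ) * ∏ k, b k (m (σ k)) := by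
  rw [AD, ← Matrix.det_transpose, Matrix.det_apply]
  exact Finset.sum_congr rfl fun σ _ => by
    simp [Units.smul_def, zsmul_eq_mul, Matrix.transpose_apply]

lemma AD_perm (N : ℕ) (a : Fin N → ℤ → ℂ) (m : Fin N → ℤ) (τ : Equiv.Perm (Fin N)) :
    AD N a (m ∘ τ) = ((Equiv.Perm.sign τ : ℤ) : ℂ) * AD N a m := by
  have h : (Matrix.of fun j k : Fin N => a j ((m ∘ τ) k)) =
      (Matrix.of fun j k : Fin N => a j (m k)).submatrix id τ := rfl
  rw [AD, h, Matrix.det_permute']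
  norm_cast

lemma FF_dec (N : ℕ) (a b : Fin N → ℤ → ℂ) (m : Fin N → ℤ) :
    FF N a b m = ∑ σ : Equiv.Perm (Fin N),
      ((Equiv.Perm.sign σ : ℤ) : ℂ) * ∏ k, (a (σ k) (m k) * b k (m k)) := by
  rw [FF, AD_expand, Finset.sum_mul]
  exact Finset.sum_congr rfl fun σ _ => by
    rw [mul_assoc, ← Finset.prod_mul_distrib]


lemma antiPermEquiv_apply_coe (N : ℕ)
    (p : {m : Fin N → ℤ // StrictAnti m} × Equiv.Perm (Fin N)) :
    ((antiPermEquiv N) p).1 = p.1.1 ∘ p.2 := rfl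

theorem cauchy_binet_infinite' (N : ℕ) (a b : Fin N → ℤ → ℂ)
    (habs : ∀ j k : Fin N, Summable fun m : ℤ => ‖a j m‖ * ‖b k m‖) :
    (∑' m : {m : Fin N → ℤ // StrictAnti m}, AD N a m.1 * AD N b m.1) =
      (Matrix.of fun j k : Fin N => ∑' m : ℤ, a j m * b k m).det := by
  classical
  have hP := fun σ : Equiv.Perm (Fin N) =>
    pi_prod_summable_tsum N (fun k m => a (σ k) m * b k m)
      (fun k => by simpa only [norm_mul] using habs (σ k) k)
  have hGsum : ∀ σ : Equiv.Perm (Fin N), Summable fun m : Fin N → ℤ =>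
      ((Equiv.Perm.sign σ : ℤ) : ℂ) * ∏ k, (a (σ k) (m k) * b k (m k)) :=
    fun σ => ((hP σ).1.of_norm).mul_left _
  have hFsum : Summable (FF N a b) := by
    refine Summable.congr (f := fun m : Fin N → ℤ => ∑ σ : Equiv.Perm (Fin N),
        ((Equiv.Perm.sign σ : ℤ) : ℂ) * ∏ k, (a (σ k) (m k) * b k (m k)))
      (summable_sum fun σ _ => hGsum σ) fun m => (FF_dec N a b m).symm
  have hRHS : (Matrix.of fun j k : Fin N => ∑' m : ℤ, a j m * b k m).det =
      ∑' m : Fin N → ℤ, FF N a b m := by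
    have h1 : (Matrix.of fun j k : Fin N => ∑' m : ℤ, a j m * b k m).det =
        ∑ σ : Equiv.Perm (Fin N), ((Equiv.Perm.sign σ : ℤ) : ℂ) *
          ∏ k, ∑' m : ℤ, a (σ k) m * b k m := by
      rw [Matrix.det_apply]
      exact Finset.sum_congr rfl fun σ _ => by
        simp [Units.smul_def, zsmul_eq_mul]
    rw [h1]
    have h2 : ∀ σ : Equiv.Perm (Fin N),
        ((Equiv.Perm.sign σ : ℤ) : ℂ) * ∏ k, ∑' m : ℤ, a (σ k) m * b k m =
        ∑' m : Fin N → ℤ, ((Equiv.Perm.sign σ : ℤ) : ℂ) *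
          ∏ k, (a (σ k) (m k) * b k (m k)) := by
      intro σ
      rw [← (hP σ).2, tsum_mul_left]
    rw [Finset.sum_congr rfl fun σ _ => h2 σ,
      ← Summable.tsum_finsetSum fun σ _ => hGsum σ]
    exact tsum_congr fun m => ((FF_dec N a b m)).symm
  have hsupp : Function.support (FF N a b) ⊆ {m | Function.Injective m} := by
    intro m hm
    by_contra hinj
    apply hm
    obtain ⟨x, y, hxy, hne⟩ := Function.not_injective_iff.mp hinj
    have hz : AD N a m = 0 :=
      Matrix.det_zero_of_column_eq hne (fun j => by simp [hxy])
    simp [FF, hz]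
  have hFsubInj : Summable (fun m : {m : Fin N → ℤ // Function.Injective m} =>
      FF N a b m.1) := hFsum.subtype _
  have hFprodSum : Summable (fun p : {m : Fin N → ℤ // StrictAnti m} ×
      Equiv.Perm (Fin N) => FF N a b (p.1.1 ∘ p.2)) := by
    have h := ((antiPermEquiv N).summable_iff
      (f := fun m : {m : Fin N → ℤ // Function.Injective m} => FF N a b m.1)).mpr hFsubInj
    exact h.congr fun p => by rw [Function.comp_apply, antiPermEquiv_apply_coe]
  have key : ∀ m₀ : {m : Fin N → ℤ // StrictAnti m},
      (∑ τ : Equiv.Perm (Fin N), FF N a b (m₀.1 ∘ τ)) = AD N a m₀.1 * AD N b m₀.1 := by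
    intro m₀
    have step : ∀ τ : Equiv.Perm (Fin N), FF N a b (m₀.1 ∘ τ) =
        AD N a m₀.1 * (((Equiv.Perm.sign τ : ℤ) : ℂ) * ∏ k, b k (m₀.1 (τ k))) := by
      intro τ
      rw [FF, AD_perm]
      simp only [Function.comp_apply]
      ring
    rw [Finset.sum_congr rfl fun τ _ => step τ, ← Finset.mul_sum, ← AD_expand']
  calc (∑' m : {m : Fin N → ℤ // StrictAnti m}, AD N a m.1 * AD N b m.1)
      = ∑' m₀ : {m : Fin N → ℤ // StrictAnti m},
          ∑ τ : Equiv.Perm (Fin N), FF N a b (m₀.1 ∘ τ) :=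
        tsum_congr fun m₀ => (key m₀).symm
    _ = ∑' m₀ : {m : Fin N → ℤ // StrictAnti m},
          ∑' τ : Equiv.Perm (Fin N), FF N a b (m₀.1 ∘ τ) :=
        tsum_congr fun m₀ => (tsum_fintype _).symm
    _ = ∑' p : {m : Fin N → ℤ // StrictAnti m} × Equiv.Perm (Fin N),
          FF N a b (p.1.1 ∘ p.2) :=
        (Summable.tsum_prod' hFprodSum fun m₀ => Summable.of_finite).symm
    _ = ∑' p : {m : Fin N → ℤ // StrictAnti m} × Equiv.Perm (Fin N),
          FF N a b ((antiPermEquiv N p).1) :=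
        tsum_congr fun p => by rw [antiPermEquiv_apply_coe]
    _ = ∑' m : {m : Fin N → ℤ // Function.Injective m}, FF N a b m.1 :=
        (antiPermEquiv N).tsum_eq fun m => FF N a b m.1
    _ = ∑' m : Fin N → ℤ, FF N a b m := tsum_subtype_eq_of_support_subset hsupp
    _ = (Matrix.of fun j k : Fin N => ∑' m : ℤ, a j m * b k m).det := hRHS.symm

end


/-- Lemma 2.2 (Cauchy–Binet identity for infinite sums). -/
theorem cauchy_binet_infinite (N : ℕ) (hN : 1 ≤ N) (a b : Fin N → ℤ → ℂ)
    (habs : ∀ j k : Fin N, Summable fun m : ℤ => ‖a j m‖ * ‖b k m‖)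
    (hdet : Summable fun m : {m : Fin N → ℤ // StrictAnti m} =>
      ‖(Matrix.of fun j k : Fin N => a j (m.1 k)).det‖ *
        ‖(Matrix.of fun j k : Fin N => b j (m.1 k)).det‖) :
    (∑' m : {m : Fin N → ℤ // StrictAnti m},
        (Matrix.of fun j k : Fin N => a j (m.1 k)).det *
          (Matrix.of fun j k : Fin N => b j (m.1 k)).det) =
      (Matrix.of fun j k : Fin N => ∑' m : ℤ, a j m * b k m).det := by
  exact cauchy_binet_infinite' N a b habs

end
end

section
/- Let N ≥ 1, let a : ℕ → ℂ satisfy Σ_{n=0}^∞ |a_n| < ∞, and set a_m := 0 for integers m < 0. Let t_1, …, t_N be pairwise distinct complex numbers with |t_j| = 1 for all j, and set L(t) := Σ_{n=0}^∞ a_n t^n. Then ∏_{j=1}^N L(t_j) = Σ_{n_1 ≥ n_2 ≥ ⋯ ≥ n_N ≥ 0} det[ a_{n_k + j − k} ]_{j,k=1}^N · det[ t_j^{n_k + N − k} ]_{j,k=1}^N / det[ t_j^{N − k} ]_{j,k=1}^N, where the sum runs over all weakly decreasing N-tuples of nonnegative integers and converges absolutely. -/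
open MeasureTheory Matrix Polynomial

noncomputable section

set_option maxHeartbeats 800000

private lemma pi_prod_summable : ∀ (N : ℕ) (f : Fin N → ℕ → ℂ),
    (∀ k, Summable fun q => ‖f k q‖) →
    Summable fun p : Fin N → ℕ => ∏ k, ‖f k (p k)‖ := by
  intro N
  induction N with
  | zero =>
    intro f _
    exact .of_finite
  | succ n ih =>
    intro f hf
    have h0 : Summable fun q => ‖f 0 q‖ := hf 0
    have hG : Summable fun p : Fin n → ℕ => ∏ k, ‖f k.succ (p k)‖ :=
      ih (fun k => f k.succ) (fun k => hf k.succ)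
    have key : Summable fun x : ℕ × (Fin n → ℕ) =>
        ‖f 0 x.1‖ * ∏ k, ‖f k.succ (x.2 k)‖ := by
      have := summable_mul_of_summable_norm (f := fun q : ℕ => ‖f 0 q‖)
        (g := fun p : Fin n → ℕ => ∏ k, ‖f k.succ (p k)‖) (by simpa using h0) (by
          refine hG.congr fun p => ?_
          rw [Real.norm_of_nonneg (Finset.prod_nonneg fun k _ => norm_nonneg _)])
      exact this
    refine (Equiv.summable_iff (Fin.consEquiv (fun _ : Fin (n+1) => ℕ))).mp (key.congr fun x => ?_)
    show ‖f 0 x.1‖ * ∏ k, ‖f k.succ (x.2 k)‖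
        = ∏ k, ‖f k ((Fin.consEquiv (fun _ : Fin (n+1) => ℕ)) x k)‖
    rw [show (Fin.consEquiv (fun _ : Fin (n+1) => ℕ)) x = Fin.cons x.1 x.2 from rfl, Fin.prod_univ_succ]
    simp

private lemma pi_prod_tsum : ∀ (N : ℕ) (f : Fin N → ℕ → ℂ),
    (∀ k, Summable fun q => ‖f k q‖) →
    (∏ k, ∑' q, f k q) = ∑' p : Fin N → ℕ, ∏ k, f k (p k) := by
  intro N
  induction N with
  | zero =>
    intro f _
    rw [tsum_eq_single (fun i : Fin 0 => i.elim0) (fun b hb => absurd (_root_.funext fun i : Fin 0 => i.elim0) hb)]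
    simp
  | succ n ih =>
    intro f hf
    have hG : Summable fun p : Fin n → ℕ => ‖∏ k, f k.succ (p k)‖ := by
      refine (pi_prod_summable n (fun k => f k.succ) (fun k => hf k.succ)).congr fun p => ?_
      rw [norm_prod]
    rw [Fin.prod_univ_succ, ih (fun k => f k.succ) (fun k => hf k.succ),
      tsum_mul_tsum_of_summable_norm (hf 0) hG,
      ← ((Fin.consEquiv (fun _ : Fin (n+1) => ℕ)).tsum_eq (fun p : Fin (n+1) → ℕ => ∏ k, f k (p k)))]
    refine tsum_congr fun x => ?_
    show f 0 x.1 * ∏ k, f k.succ (x.2 k)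
        = ∏ k, f k ((Fin.consEquiv (fun _ : Fin (n+1) => ℕ)) x k)
    rw [show (Fin.consEquiv (fun _ : Fin (n+1) => ℕ)) x = Fin.cons x.1 x.2 from rfl, Fin.prod_univ_succ]
    simp

private lemma strictAnti_key {N : ℕ} {l : Fin N → ℕ} (hl : StrictAnti l) :
    ∀ (d : ℕ) (k k' : Fin N), k.1 + d = k'.1 → l k' + d ≤ l k := by
  intro d
  induction d with
  | zero =>
    intro k k' h
    have : k = k' := Fin.ext (by omega)
    rw [this]; omega
  | succ d ihd =>
    intro k k' h
    have hk'' : k.1 + d < N := by have := k'.2; omega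
    have h1 : l k' < l ⟨k.1 + d, hk''⟩ := hl (by simp [Fin.lt_def]; omega)
    have h2 := ihd k ⟨k.1 + d, hk''⟩ rfl
    omega

private lemma strictMono_fin_le {N : ℕ} {u : Fin N → Fin N} (hu : StrictMono u) :
    ∀ j : Fin N, j.1 ≤ (u j).1 := by
  have key : ∀ (d : ℕ) (k k' : Fin N), k.1 + d = k'.1 → (u k).1 + d ≤ (u k').1 := by
    intro d
    induction d with
    | zero =>
      intro k k' h
      have : k = k' := Fin.ext (by omega)
      rw [this]; omega
    | succ d ihd =>
      intro k k' h
      have hk'' : k.1 + d < N := by have := k'.2; omega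
      have h1 : u ⟨k.1 + d, hk''⟩ < u k' := hu (by simp [Fin.lt_def]; omega)
      have h2 := ihd k ⟨k.1 + d, hk''⟩ rfl
      rw [Fin.lt_def] at h1
      omega
  intro j
  have h0 : (0 : ℕ) < N := by have := j.2; omega
  have := key j.1 ⟨0, h0⟩ j (by simp)
  omega

private lemma strictMono_perm_refl {N : ℕ} (π : Equiv.Perm (Fin N)) (h : StrictMono ⇑π) :
    π = Equiv.refl _ := by
  have hsum : ∑ j : Fin N, (j.1 : ℕ) = ∑ j : Fin N, ((π j).1 : ℕ) :=
    (Equiv.sum_comp π (fun j => (j.1 : ℕ))).symm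
  have hle : ∀ j ∈ Finset.univ, (j.1 : ℕ) ≤ ((π j).1 : ℕ) := fun j _ => strictMono_fin_le h j
  have heq := (Finset.sum_eq_sum_iff_of_le hle).mp hsum
  ext j
  simpa using (heq j (Finset.mem_univ j)).symm

private lemma summable_shift (a : ℤ → ℂ) (ha0 : ∀ m : ℤ, m < 0 → a m = 0)
    (hsum : Summable fun m : ℕ => ‖a (m : ℤ)‖) (c : ℤ) :
    Summable fun q : ℕ => ‖a ((q : ℤ) + c)‖ := by
  have haZ : Summable fun m : ℤ => ‖a m‖ := by
    refine (Function.Injective.summable_iff (Nat.cast_injective : Function.Injective (Nat.cast : ℕ → ℤ)) ?_).mp hsum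
    intro x hx
    have hx0 : x < 0 := by
      by_contra hx0
      exact hx ⟨x.toNat, by omega⟩
    rw [ha0 x hx0, norm_zero]
  have h1 : Summable fun m : ℤ => ‖a (m + c)‖ := by
    have := (Equiv.summable_iff (Equiv.addRight c) (f := fun m : ℤ => ‖a m‖)).mpr haZ
    exact this
  have h2 := h1.comp_injective (Nat.cast_injective : Function.Injective (Nat.cast : ℕ → ℤ))
  exact h2

private lemma Ddet_ne_zero {N : ℕ} (t : Fin N → ℂ) (hdist : Function.Injective t) :
    (Matrix.of fun j k : Fin N => t j ^ (N - 1 - (k : ℕ))).det ≠ 0 := by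
  have hrev : ∀ k : Fin N, ((Fin.rev k : Fin N) : ℕ) = N - 1 - (k : ℕ) := by
    intro k
    rw [Fin.val_rev]
    omega
  have h1 : (Matrix.of fun j k : Fin N => t j ^ (N - 1 - (k : ℕ)))
      = (Matrix.vandermonde t).submatrix id ⇑(Fin.revPerm (n := N)) := by
    ext j k
    simp [Matrix.vandermonde, Fin.revPerm, hrev]
    congr 1
    omega
  rw [h1, Matrix.det_permute']
  have h2 : (Matrix.vandermonde t).det ≠ 0 := Matrix.det_vandermonde_ne_zero_iff.mpr hdist
  apply mul_ne_zero _ h2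
  rcases Int.units_eq_one_or (Equiv.Perm.sign (Fin.revPerm (n := N))) with h | h <;> simp [h]

private lemma norm_det_le {N : ℕ} (M : Matrix (Fin N) (Fin N) ℂ) (h : ∀ i j, ‖M i j‖ = 1) :
    ‖M.det‖ ≤ (N.factorial : ℝ) := by
  rw [Matrix.det_apply]
  refine (norm_sum_le _ _).trans ?_
  have hb : ∀ σ : Equiv.Perm (Fin N), ‖Equiv.Perm.sign σ • ∏ i, M (σ i) i‖ = 1 := by
    intro σ
    have hp : ‖∏ i, M (σ i) i‖ = 1 := by
      rw [norm_prod]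
      simp [h]
    rcases Int.units_eq_one_or (Equiv.Perm.sign σ) with hs | hs <;>
      simp [hs, Units.smul_def, zsmul_eq_mul, hp]
  calc (∑ σ : Equiv.Perm (Fin N), ‖Equiv.Perm.sign σ • ∏ i, M (σ i) i‖)
      = ∑ _σ : Equiv.Perm (Fin N), (1:ℝ) := Finset.sum_congr rfl fun σ _ => hb σ
    _ ≤ (N.factorial : ℝ) := by
      simp [Finset.card_univ, Fintype.card_perm]

private lemma exists_sd_perm {N : ℕ} {p : Fin N → ℕ} (hp : Function.Injective p) :
    ∃ (l : Fin N → ℕ) (τ : Equiv.Perm (Fin N)), StrictAnti l ∧ p = l ∘ ⇑τ := by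
  classical
  have hcard : (Finset.image p Finset.univ).card = N := by
    rw [Finset.card_image_of_injective _ hp, Finset.card_univ, Fintype.card_fin]
  set oi := (Finset.image p Finset.univ).orderIsoOfFin hcard with hoi
  have hmem : ∀ k, p k ∈ Finset.image p Finset.univ := fun k =>
    Finset.mem_image_of_mem p (Finset.mem_univ k)
  set tf : Fin N → Fin N := fun k => (oi.symm ⟨p k, hmem k⟩).rev with htf
  have htinj : Function.Injective tf := by
    intro k k' hkk
    apply hp
    have h1 : oi.symm ⟨p k, hmem k⟩ = oi.symm ⟨p k', hmem k'⟩ := Fin.rev_injective hkk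
    have h2 := congrArg (fun x => (oi x : ℕ)) h1
    simpa using h2
  refine ⟨fun k => (oi k.rev : ℕ), Equiv.ofBijective tf (Finite.injective_iff_bijective.mp htinj),
    ?_, ?_⟩
  · intro k k' hkk
    exact Subtype.coe_lt_coe.mpr (oi.strictMono (Fin.rev_lt_rev.mpr hkk))
  · funext k
    show p k = (oi (tf k).rev : ℕ)
    rw [htf]
    simp

private lemma sd_perm_inj {N : ℕ} {l l' : Fin N → ℕ} {τ τ' : Equiv.Perm (Fin N)}
    (hl : StrictAnti l) (hl' : StrictAnti l') (h : l ∘ ⇑τ = l' ∘ ⇑τ') : l = l' ∧ τ = τ' := by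
  have hπ : ∀ x, l x = l' ((τ.symm.trans τ') x) := by
    intro x
    have := congrFun h (τ.symm x)
    simpa using this
  have hmono : StrictMono ⇑(τ.symm.trans τ') := by
    intro x y hxy
    have h1 : l' ((τ.symm.trans τ') y) < l' ((τ.symm.trans τ') x) := by
      rw [← hπ, ← hπ]
      exact hl hxy
    exact hl'.lt_iff_gt.mp h1
  have hrefl := strictMono_perm_refl _ hmono
  have hll' : l = l' := by
    funext x
    have h2 := hπ x
    rw [hrefl] at h2
    simpa using h2
  refine ⟨hll', ?_⟩
  ext x
  have h2 := Equiv.ext_iff.mp hrefl (τ x)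
  have h3 : τ x = τ' x := by simpa using h2.symm
  exact congrArg Fin.val h3

private def Tdet {N : ℕ} (t : Fin N → ℂ) (p : Fin N → ℕ) : ℂ :=
  (Matrix.of fun j k : Fin N => t j ^ p k).det

private def cTerm {N : ℕ} (a : ℤ → ℂ) (t : Fin N → ℂ) (p : Fin N → ℕ) : ℂ :=
  (∏ i : Fin N, a ((p i : ℤ) + (i : ℕ) - ((N : ℤ) - 1))) * Tdet t p

private lemma gprod_summable {N : ℕ} (a : ℤ → ℂ) (ha0 : ∀ m : ℤ, m < 0 → a m = 0)
    (hsum : Summable fun m : ℕ => ‖a (m : ℤ)‖) :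
    Summable fun p : Fin N → ℕ => ∏ k : Fin N, ‖a ((p k : ℤ) + (k : ℕ) - ((N : ℤ) - 1))‖ :=
  pi_prod_summable N (fun k q => a ((q : ℤ) + (k : ℕ) - ((N : ℤ) - 1)))
    (fun k => (summable_shift a ha0 hsum ((k : ℕ) - ((N : ℤ) - 1))).congr
      (fun q => by rw [← add_sub_assoc]))

private lemma cTerm_norm_summable {N : ℕ} (a : ℤ → ℂ) (ha0 : ∀ m : ℤ, m < 0 → a m = 0)
    (hsum : Summable fun m : ℕ => ‖a (m : ℤ)‖) (t : Fin N → ℂ)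
    (hunit : ∀ j, ‖t j‖ = 1) :
    Summable fun p : Fin N → ℕ => ‖cTerm a t p‖ := by
  have htnorm : ∀ (j : Fin N) (m : ℕ), ‖t j ^ m‖ = 1 := by
    intro j m
    rw [norm_pow, hunit j, one_pow]
  have hTle : ∀ p : Fin N → ℕ, ‖Tdet t p‖ ≤ (N.factorial : ℝ) := by
    intro p
    exact norm_det_le _ (fun i j => htnorm i (p j))
  refine Summable.of_nonneg_of_le (fun p => norm_nonneg _) ?_
    ((gprod_summable a ha0 hsum).mul_right (N.factorial : ℝ))
  intro p
  rw [cTerm, norm_mul, norm_prod]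
  exact mul_le_mul_of_nonneg_left (hTle p)
    (Finset.prod_nonneg fun k _ => norm_nonneg _)

private lemma key_identity {N : ℕ} (a : ℤ → ℂ) (ha0 : ∀ m : ℤ, m < 0 → a m = 0)
    (hsum : Summable fun m : ℕ => ‖a (m : ℤ)‖) (t : Fin N → ℂ)
    (hunit : ∀ j, ‖t j‖ = 1) :
    (∏ j : Fin N, ∑' m : ℕ, a (m : ℤ) * t j ^ m)
        * (Matrix.of fun j k : Fin N => t j ^ (N - 1 - (k : ℕ))).det
      = ∑' p : Fin N → ℕ, cTerm a t p := by
  classical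
  have htnorm : ∀ (j : Fin N) (m : ℕ), ‖t j ^ m‖ = 1 := by
    intro j m
    rw [norm_pow, hunit j, one_pow]
  have hfs : ∀ j : Fin N, Summable fun q : ℕ => ‖a (q : ℤ) * t j ^ q‖ := by
    intro j
    refine hsum.congr fun q => ?_
    rw [norm_mul, htnorm, mul_one]
  have stepA : (∏ j : Fin N, ∑' m : ℕ, a (m : ℤ) * t j ^ m)
      = ∑' m : Fin N → ℕ, ∏ j : Fin N, (a (m j : ℤ) * t j ^ (m j)) :=
    pi_prod_tsum N (fun j q => a (q : ℤ) * t j ^ q) hfs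
  set E : Equiv.Perm (Fin N) → (Fin N → ℕ) → ℂ := fun σ m =>
    ((Equiv.Perm.sign σ : ℤ) : ℂ) *
      ∏ i : Fin N, (a (m (σ i) : ℤ) * t (σ i) ^ (m (σ i) + (N - 1 - (i : ℕ)))) with hE
  set H : Equiv.Perm (Fin N) → (Fin N → ℕ) → ℂ := fun σ p =>
    ((Equiv.Perm.sign σ : ℤ) : ℂ) *
      ∏ i : Fin N, (a ((p i : ℤ) + (i : ℕ) - ((N : ℤ) - 1)) * t (σ i) ^ (p i)) with hH
  have hsign : ∀ σ : Equiv.Perm (Fin N), ‖((Equiv.Perm.sign σ : ℤ) : ℂ)‖ = 1 := by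
    intro σ
    rcases Int.units_eq_one_or (Equiv.Perm.sign σ) with h | h <;> simp [h]
  have hconst : Summable fun m : Fin N → ℕ => ∏ j : Fin N, ‖a (m j : ℤ)‖ :=
    pi_prod_summable N (fun _ q => a (q : ℤ)) (fun _ => hsum)
  have hEsum : ∀ σ, Summable (E σ) := by
    intro σ
    refine Summable.of_norm_bounded hconst ?_
    intro m
    rw [hE]
    simp only []
    rw [norm_mul, hsign, one_mul, norm_prod]
    rw [show (∏ i : Fin N, ‖a (m (σ i) : ℤ) * t (σ i) ^ (m (σ i) + (N - 1 - (i : ℕ)))‖)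
        = ∏ i : Fin N, ‖a (m (σ i) : ℤ)‖ from
      Finset.prod_congr rfl fun i _ => by rw [norm_mul, htnorm, mul_one]]
    rw [Equiv.prod_comp σ (fun j => ‖a (m j : ℤ)‖)]
  have hHsum : ∀ σ, Summable (H σ) := by
    intro σ
    refine Summable.of_norm_bounded (gprod_summable a ha0 hsum) ?_
    intro p
    rw [hH]
    simp only []
    rw [norm_mul, hsign, one_mul, norm_prod]
    rw [show (∏ i : Fin N, ‖a ((p i : ℤ) + (i : ℕ) - ((N : ℤ) - 1)) * t (σ i) ^ (p i)‖)
        = ∏ i : Fin N, ‖a ((p i : ℤ) + (i : ℕ) - ((N : ℤ) - 1))‖ from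
      Finset.prod_congr rfl fun i _ => by rw [norm_mul, htnorm, mul_one]]
  have stepC : ∀ m : Fin N → ℕ,
      (∏ j : Fin N, (a (m j : ℤ) * t j ^ (m j)))
          * (Matrix.of fun j k : Fin N => t j ^ (N - 1 - (k : ℕ))).det
        = ∑ σ : Equiv.Perm (Fin N), E σ m := by
    intro m
    rw [Matrix.det_apply, Finset.mul_sum]
    refine Finset.sum_congr rfl fun σ _ => ?_
    have hsplit : (∏ i : Fin N, (a (m (σ i) : ℤ) * t (σ i) ^ (m (σ i) + (N - 1 - (i : ℕ)))))
        = (∏ i : Fin N, (a (m (σ i) : ℤ) * t (σ i) ^ (m (σ i))))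
          * ∏ i : Fin N, t (σ i) ^ (N - 1 - (i : ℕ)) := by
      rw [← Finset.prod_mul_distrib]
      refine Finset.prod_congr rfl fun i _ => ?_
      rw [pow_add]
      ring
    rw [← Equiv.prod_comp σ (fun j => a (m j : ℤ) * t j ^ (m j)), hE]
    simp only [Matrix.of_apply, Units.smul_def, zsmul_eq_mul]
    rw [hsplit]
    ring
  have stepEH : ∀ σ : Equiv.Perm (Fin N),
      ∑' m : Fin N → ℕ, E σ m = ∑' p : Fin N → ℕ, H σ p := by
    intro σ
    set r : (Fin N → ℕ) → (Fin N → ℕ) := fun m i => m (σ i) + (N - 1 - (i : ℕ)) with hr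
    have hrinj : Function.Injective r := by
      intro m m' hmm
      funext j
      have h1 := congrFun hmm (σ.symm j)
      simp only [hr, Equiv.apply_symm_apply] at h1
      omega
    have hrsupp : Function.support (H σ) ⊆ Set.range r := by
      intro p hp
      by_contra hnr
      apply hp
      have hall : ¬ ∀ i : Fin N, N - 1 - (i : ℕ) ≤ p i := by
        intro hall
        exact hnr ⟨fun j => p (σ.symm j) - (N - 1 - ((σ.symm j : Fin N) : ℕ)), by
          funext i
          simp only [hr, Equiv.symm_apply_apply]
          exact Nat.sub_add_cancel (hall i)⟩
      push_neg at hall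
      obtain ⟨i, hi⟩ := hall
      have hz : a ((p i : ℤ) + (i : ℕ) - ((N : ℤ) - 1)) = 0 := by
        refine ha0 _ ?_
        have := i.2
        omega
      rw [hH]
      simp only []
      rw [Finset.prod_eq_zero (Finset.mem_univ i) (by rw [hz, zero_mul]), mul_zero]
    have h1 := hrinj.tsum_eq (f := H σ) hrsupp
    rw [← h1]
    refine tsum_congr fun m => ?_
    rw [hE, hH]
    simp only [hr]
    congr 1
    refine Finset.prod_congr rfl fun i _ => ?_
    have hidx : ((m (σ i) + (N - 1 - (i : ℕ)) : ℕ) : ℤ) + (i : ℕ) - ((N : ℤ) - 1)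
        = (m (σ i) : ℤ) := by
      have := i.2
      omega
    rw [hidx]
  have stepFinal : ∀ p : Fin N → ℕ,
      ∑ σ : Equiv.Perm (Fin N), H σ p = cTerm a t p := by
    intro p
    rw [cTerm, Tdet, Matrix.det_apply, Finset.mul_sum]
    refine Finset.sum_congr rfl fun σ _ => ?_
    rw [hH]
    simp only [Matrix.of_apply, Units.smul_def, zsmul_eq_mul]
    rw [Finset.prod_mul_distrib]
    ring
  calc (∏ j : Fin N, ∑' m : ℕ, a (m : ℤ) * t j ^ m)
        * (Matrix.of fun j k : Fin N => t j ^ (N - 1 - (k : ℕ))).det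
      = (∑' m : Fin N → ℕ, ∏ j : Fin N, (a (m j : ℤ) * t j ^ (m j)))
        * (Matrix.of fun j k : Fin N => t j ^ (N - 1 - (k : ℕ))).det := by rw [stepA]
    _ = ∑' m : Fin N → ℕ, (∏ j : Fin N, (a (m j : ℤ) * t j ^ (m j)))
        * (Matrix.of fun j k : Fin N => t j ^ (N - 1 - (k : ℕ))).det := tsum_mul_right.symm
    _ = ∑' m : Fin N → ℕ, ∑ σ : Equiv.Perm (Fin N), E σ m := tsum_congr stepC
    _ = ∑ σ : Equiv.Perm (Fin N), ∑' m : Fin N → ℕ, E σ m := Summable.tsum_finsetSum fun σ _ => hEsum σ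
    _ = ∑ σ : Equiv.Perm (Fin N), ∑' p : Fin N → ℕ, H σ p :=
        Finset.sum_congr rfl fun σ _ => stepEH σ
    _ = ∑' p : Fin N → ℕ, ∑ σ : Equiv.Perm (Fin N), H σ p := (Summable.tsum_finsetSum fun σ _ => hHsum σ).symm
    _ = ∑' p : Fin N → ℕ, cTerm a t p := tsum_congr stepFinal

private lemma group_identity {N : ℕ} (a : ℤ → ℂ) (t : Fin N → ℂ)
    (hc : Summable fun p : Fin N → ℕ => ‖cTerm a t p‖) :
    ((∑' p : Fin N → ℕ, cTerm a t p)
      = ∑' l : {l : Fin N → ℕ // StrictAnti l},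
          (Matrix.of fun j k : Fin N => a ((l.1 j : ℤ) + (k : ℕ) - ((N : ℤ) - 1))).det
            * Tdet t l.1)
    ∧ (Summable fun l : {l : Fin N → ℕ // StrictAnti l} =>
        ∑ τ : Equiv.Perm (Fin N), ‖cTerm a t (l.1 ∘ ⇑τ)‖)
    ∧ (∀ l : {l : Fin N → ℕ // StrictAnti l},
        (Matrix.of fun j k : Fin N => a ((l.1 j : ℤ) + (k : ℕ) - ((N : ℤ) - 1))).det
            * Tdet t l.1
          = ∑ τ : Equiv.Perm (Fin N), cTerm a t (l.1 ∘ ⇑τ)) := by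
  classical
  set e : {l : Fin N → ℕ // StrictAnti l} × Equiv.Perm (Fin N) → (Fin N → ℕ) :=
    fun x => x.1.1 ∘ ⇑x.2 with he
  have he_inj : Function.Injective e := by
    intro x y hxy
    obtain ⟨h1, h2⟩ := sd_perm_inj x.1.2 y.1.2 hxy
    exact Prod.ext (Subtype.ext h1) h2
  have he_supp : Function.support (cTerm a t) ⊆ Set.range e := by
    intro p hp
    have hpinj : Function.Injective p := by
      by_contra hni
      apply hp
      simp only [Function.Injective] at hni
      push_neg at hni
      obtain ⟨k, k', hpp, hkk⟩ := hni
      have hT : Tdet t p = 0 := by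
        refine Matrix.det_zero_of_column_eq hkk fun j => ?_
        simp [hpp]
      rw [cTerm, hT, mul_zero]
    obtain ⟨l, τ, hl, hpe⟩ := exists_sd_perm hpinj
    exact ⟨(⟨l, hl⟩, τ), hpe.symm⟩
  have hce : Summable fun x => cTerm a t (e x) := (hc.of_norm).comp_injective he_inj
  have hdet : ∀ l : {l : Fin N → ℕ // StrictAnti l},
      (Matrix.of fun j k : Fin N => a ((l.1 j : ℤ) + (k : ℕ) - ((N : ℤ) - 1))).det
          * Tdet t l.1
        = ∑ τ : Equiv.Perm (Fin N), cTerm a t (l.1 ∘ ⇑τ) := by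
    intro l
    have hsub : ∀ τ : Equiv.Perm (Fin N),
        Tdet t (l.1 ∘ ⇑τ) = ((Equiv.Perm.sign τ : ℤ) : ℂ) * Tdet t l.1 := by
      intro τ
      have hmat : (Matrix.of fun j k : Fin N => t j ^ (l.1 ∘ ⇑τ) k)
          = (Matrix.of fun j k : Fin N => t j ^ l.1 k).submatrix id ⇑τ := by
        ext j k
        simp
      rw [Tdet, hmat, Matrix.det_permute', Tdet]
    rw [Matrix.det_apply, Finset.sum_mul]
    refine Finset.sum_congr rfl fun τ _ => ?_
    rw [cTerm, hsub τ]
    simp only [Matrix.of_apply, Units.smul_def, zsmul_eq_mul, Function.comp_apply]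
    ring
  have hfiber : ∀ l : {l : Fin N → ℕ // StrictAnti l},
      HasSum (fun τ : Equiv.Perm (Fin N) => ‖cTerm a t (l.1 ∘ ⇑τ)‖)
        (∑ τ : Equiv.Perm (Fin N), ‖cTerm a t (l.1 ∘ ⇑τ)‖) := fun l => hasSum_fintype _
  have hnorm_sum : Summable fun x : {l : Fin N → ℕ // StrictAnti l} × Equiv.Perm (Fin N) =>
      ‖cTerm a t (e x)‖ := hc.comp_injective he_inj
  have hsumG : Summable fun l : {l : Fin N → ℕ // StrictAnti l} =>
      ∑ τ : Equiv.Perm (Fin N), ‖cTerm a t (l.1 ∘ ⇑τ)‖ :=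
    ⟨_, hnorm_sum.hasSum.prod_fiberwise fun l => hfiber l⟩
  refine ⟨?_, hsumG, hdet⟩
  rw [← he_inj.tsum_eq he_supp, hce.tsum_prod]
  refine tsum_congr fun l => ?_
  rw [tsum_fintype]
  exact (hdet l).symm


/-- Proposition 2.3 (character expansion of a generating function with Taylor coefficients). -/
theorem character_expansion (N : ℕ) (hN : 1 ≤ N) (a : ℤ → ℂ)
    (ha0 : ∀ m : ℤ, m < 0 → a m = 0)
    (hsum : Summable fun m : ℕ => ‖a (m : ℤ)‖)
    (t : Fin N → ℂ) (hdist : Function.Injective t)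
    (hunit : ∀ j, ‖t j‖ = 1) :
    (Summable fun n : {n : Fin N → ℕ // Antitone n} =>
      ‖(Matrix.of fun j k : Fin N => a ((n.1 k : ℤ) + ((j : ℕ) : ℤ) - ((k : ℕ) : ℤ))).det *
        (Matrix.of fun j k : Fin N => t j ^ (n.1 k + (N - 1 - (k : ℕ)))).det /
        (Matrix.of fun j k : Fin N => t j ^ (N - 1 - (k : ℕ))).det‖) ∧
    (∏ j : Fin N, ∑' m : ℕ, a (m : ℤ) * t j ^ m) =
      ∑' n : {n : Fin N → ℕ // Antitone n},
        (Matrix.of fun j k : Fin N => a ((n.1 k : ℤ) + ((j : ℕ) : ℤ) - ((k : ℕ) : ℤ))).det *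
          (Matrix.of fun j k : Fin N => t j ^ (n.1 k + (N - 1 - (k : ℕ)))).det /
          (Matrix.of fun j k : Fin N => t j ^ (N - 1 - (k : ℕ))).det := by
  classical
  set D := (Matrix.of fun j k : Fin N => t j ^ (N - 1 - (k : ℕ))).det with hD
  have hDne : D ≠ 0 := Ddet_ne_zero t hdist
  have hc := cTerm_norm_summable a ha0 hsum t hunit
  obtain ⟨hval, hsumG, hdet⟩ := group_identity a t hc
  have hkey := key_identity a ha0 hsum t hunit
  rw [← hD] at hkey
  have hanti_bound : ∀ (l : {l : Fin N → ℕ // StrictAnti l}) (k : Fin N),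
      N - 1 - (k : ℕ) ≤ l.1 k := by
    intro l k
    have hk2 := k.2
    have := strictAnti_key l.2 (N - 1 - k.1) k ⟨N - 1, by omega⟩ (by simp; omega)
    omega
  let eq2 : {n : Fin N → ℕ // Antitone n} ≃ {l : Fin N → ℕ // StrictAnti l} :=
    { toFun := fun n => ⟨fun k => n.1 k + (N - 1 - (k : ℕ)), by
        intro k k' hkk
        have h1 : n.1 k' ≤ n.1 k := n.2 hkk.le
        have h2 := k'.2
        rw [Fin.lt_def] at hkk
        simp only []
        omega⟩
      invFun := fun l => ⟨fun k => l.1 k - (N - 1 - (k : ℕ)), by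
        intro k k' hkk
        rcases eq_or_lt_of_le hkk with h | h
        · rw [h]
        · have h1 := strictAnti_key l.2 (k'.1 - k.1) k k' (by rw [Fin.lt_def] at h; omega)
          have h2 := hanti_bound l k'
          have h3 := k'.2
          rw [Fin.lt_def] at h
          simp only []
          omega⟩
      left_inv := fun n => Subtype.ext (funext fun k => by simp)
      right_inv := fun l => Subtype.ext (funext fun k => Nat.sub_add_cancel (hanti_bound l k)) }
  have hterm : ∀ n : {n : Fin N → ℕ // Antitone n},
      (Matrix.of fun j k : Fin N => a (((eq2 n).1 j : ℤ) + (k : ℕ) - ((N : ℤ) - 1))).det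
          * Tdet t (eq2 n).1
        = (Matrix.of fun j k : Fin N => a ((n.1 k : ℤ) + ((j : ℕ) : ℤ) - ((k : ℕ) : ℤ))).det *
          (Matrix.of fun j k : Fin N => t j ^ (n.1 k + (N - 1 - (k : ℕ)))).det := by
    intro n
    have hA : (Matrix.of fun j k : Fin N => a ((n.1 k : ℤ) + ((j : ℕ) : ℤ) - ((k : ℕ) : ℤ)))
        = (Matrix.of fun j k : Fin N => a (((eq2 n).1 j : ℤ) + (k : ℕ) - ((N : ℤ) - 1)))ᵀ := by
      ext j k
      simp only [Matrix.transpose_apply, Matrix.of_apply]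
      congr 1
      show (n.1 k : ℤ) + (j : ℕ) - (k : ℕ)
          = ((n.1 k + (N - 1 - (k : ℕ)) : ℕ) : ℤ) + (j : ℕ) - ((N : ℤ) - 1)
      have := k.2
      omega
    rw [hA, Matrix.det_transpose]
    rfl
  have h2 : (∏ j : Fin N, ∑' m : ℕ, a (m : ℤ) * t j ^ m) =
      ∑' n : {n : Fin N → ℕ // Antitone n},
        (Matrix.of fun j k : Fin N => a ((n.1 k : ℤ) + ((j : ℕ) : ℤ) - ((k : ℕ) : ℤ))).det *
          (Matrix.of fun j k : Fin N => t j ^ (n.1 k + (N - 1 - (k : ℕ)))).det / D := by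
    have hP : (∏ j : Fin N, ∑' m : ℕ, a (m : ℤ) * t j ^ m)
        = (∑' l : {l : Fin N → ℕ // StrictAnti l},
            (Matrix.of fun j k : Fin N => a ((l.1 j : ℤ) + (k : ℕ) - ((N : ℤ) - 1))).det
              * Tdet t l.1) / D := by
      rw [← hval, ← hkey]
      field_simp
    rw [hP, ← tsum_div_const]
    rw [← eq2.tsum_eq (fun l : {l : Fin N → ℕ // StrictAnti l} =>
      (Matrix.of fun j k : Fin N => a ((l.1 j : ℤ) + (k : ℕ) - ((N : ℤ) - 1))).det
        * Tdet t l.1 / D)]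
    refine tsum_congr fun n => ?_
    show (Matrix.of fun j k : Fin N => a (((eq2 n).1 j : ℤ) + (k : ℕ) - ((N : ℤ) - 1))).det
        * Tdet t (eq2 n).1 / D = _
    rw [hterm n]
  refine ⟨?_, h2⟩
  have hS : Summable fun l : {l : Fin N → ℕ // StrictAnti l} =>
      ‖(Matrix.of fun j k : Fin N => a ((l.1 j : ℤ) + (k : ℕ) - ((N : ℤ) - 1))).det
        * Tdet t l.1 / D‖ := by
    have h1 : Summable fun l : {l : Fin N → ℕ // StrictAnti l} =>
        ‖(Matrix.of fun j k : Fin N => a ((l.1 j : ℤ) + (k : ℕ) - ((N : ℤ) - 1))).det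
          * Tdet t l.1‖ := by
      refine Summable.of_nonneg_of_le (fun l => norm_nonneg _) ?_ hsumG
      intro l
      rw [hdet l]
      exact norm_sum_le _ _
    refine (h1.div_const ‖D‖).congr fun l => ?_
    rw [norm_div]
  have hS2 := (Equiv.summable_iff eq2
    (f := fun l : {l : Fin N → ℕ // StrictAnti l} =>
      ‖(Matrix.of fun j k : Fin N => a ((l.1 j : ℤ) + (k : ℕ) - ((N : ℤ) - 1))).det
        * Tdet t l.1 / D‖)).mpr hS
  refine hS2.congr fun n => ?_
  show ‖(Matrix.of fun j k : Fin N => a (((eq2 n).1 j : ℤ) + (k : ℕ) - ((N : ℤ) - 1))).det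
      * Tdet t (eq2 n).1 / D‖ = _
  rw [hterm n]

end
end

section
/- Let N ≥ 1, let α ∈ ℂ, and let m_1, …, m_N be nonnegative integers. Then det[ binom(α + N − j, m_k) ]_{j,k=1}^N = det[ binom(α, m_k − N + j) ]_{j,k=1}^N. -/
open MeasureTheory Matrix Polynomial

noncomputable section

lemma cbinom_zero' (γ : ℂ) : cbinom γ 0 = 1 := by simp [cbinom]

lemma cbinomZ_coe (γ : ℂ) (n : ℕ) : cbinomZ γ (n : ℤ) = cbinom γ n := by
  simp [cbinomZ]

lemma cbinom_succ_succ (γ : ℂ) (n : ℕ) :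
    cbinom (γ + 1) (n + 1) = cbinom γ (n + 1) + cbinom γ n := by
  have h1 : ∏ i ∈ Finset.range (n + 1), (γ + 1 - (i : ℂ)) =
      (γ + 1) * ∏ i ∈ Finset.range n, (γ - (i : ℂ)) := by
    rw [Finset.prod_range_succ' (fun i : ℕ => (γ + 1 - (i : ℂ)))]
    rw [mul_comm]
    congr 1
    · norm_num
    · refine Finset.prod_congr rfl fun i _ => ?_
      push_cast
      ring
  have h2 : ∏ i ∈ Finset.range (n + 1), (γ - (i : ℂ)) =
      (∏ i ∈ Finset.range n, (γ - (i : ℂ))) * (γ - n) := Finset.prod_range_succ _ _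
  unfold cbinom
  rw [h1, h2, Nat.factorial_succ]
  have hn : ((n.factorial : ℕ) : ℂ) ≠ 0 := Nat.cast_ne_zero.mpr n.factorial_ne_zero
  have hn1 : ((n : ℂ) + 1) ≠ 0 := by
    have : ((n + 1 : ℕ) : ℂ) ≠ 0 := Nat.cast_ne_zero.mpr (Nat.succ_ne_zero n)
    push_cast at this; exact this
  push_cast
  field_simp
  ring

lemma cbinomZ_pascal (γ : ℂ) (k : ℤ) :
    cbinomZ (γ + 1) k = cbinomZ γ k + cbinomZ γ (k - 1) := by
  by_cases hk : 0 ≤ k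
  · obtain ⟨n, rfl⟩ := Int.eq_ofNat_of_zero_le hk
    cases n with
    | zero => simp [cbinomZ, cbinom_zero']
    | succ m =>
      have h1 : ((m + 1 : ℕ) : ℤ) - 1 = (m : ℤ) := by push_cast; ring
      rw [h1, cbinomZ_coe, cbinomZ_coe, cbinomZ_coe]
      exact cbinom_succ_succ γ m
  · have hk1 : ¬ (0 : ℤ) ≤ k - 1 := by omega
    simp [cbinomZ, hk, hk1]
    intro h; omega

lemma cbinomZ_add_nat (γ : ℂ) (s : ℕ) (k : ℤ) :
    cbinomZ (γ + (s : ℂ)) k =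
      ∑ i ∈ Finset.range (s + 1), (Nat.choose s i : ℂ) * cbinomZ γ (k - i) := by
  induction s generalizing k with
  | zero => simp
  | succ s ih =>
    have hcast : γ + ((s + 1 : ℕ) : ℂ) = (γ + (s : ℂ)) + 1 := by push_cast; ring
    rw [hcast, cbinomZ_pascal, ih, ih]
    rw [Finset.sum_range_succ' (fun i : ℕ => (Nat.choose (s + 1) i : ℂ) * cbinomZ γ (k - i))
      (s + 1)]
    have hterm : ∀ i ∈ Finset.range (s + 1),
        (Nat.choose (s + 1) (i + 1) : ℂ) * cbinomZ γ (k - ((i : ℕ) + 1 : ℕ)) =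
          (Nat.choose s i : ℂ) * cbinomZ γ (k - 1 - i) +
          (Nat.choose s (i + 1) : ℂ) * cbinomZ γ (k - ((i : ℕ) + 1 : ℕ)) := by
      intro i _
      have h1 : (k : ℤ) - ((i : ℕ) + 1 : ℕ) = k - 1 - i := by push_cast; ring
      rw [Nat.choose_succ_succ, h1]
      push_cast
      ring
    rw [Finset.sum_congr rfl hterm, Finset.sum_add_distrib]
    have h2 : (∑ i ∈ Finset.range (s + 1),
        (Nat.choose s (i + 1) : ℂ) * cbinomZ γ (k - ((i : ℕ) + 1 : ℕ))) +
        (Nat.choose (s + 1) 0 : ℂ) * cbinomZ γ (k - (0 : ℕ)) =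
        ∑ i ∈ Finset.range (s + 1), (Nat.choose s i : ℂ) * cbinomZ γ (k - i) := by
      have hA := (Finset.sum_range_succ'
        (fun i : ℕ => (Nat.choose s i : ℂ) * cbinomZ γ (k - i)) (s + 1)).symm
      have hc0 : ((s + 1).choose 0 : ℂ) = (s.choose 0 : ℂ) := by simp
      rw [hc0, hA, Finset.sum_range_succ]
      simp [Nat.choose_succ_self]
    rw [add_assoc, h2]
    ring

/-- Equation (2.13): determinant identity for binomial coefficients. -/
theorem det_binomial_shift (N : ℕ) (hN : 1 ≤ N) (α : ℂ) (m : Fin N → ℕ) :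
    (Matrix.of fun j k : Fin N => cbinom (α + (N : ℂ) - (((j : ℕ) : ℂ) + 1)) (m k)).det =
      (Matrix.of fun j k : Fin N =>
        cbinomZ α ((m k : ℤ) - (N : ℤ) + (((j : ℕ) : ℤ) + 1))).det := by
  set B : Matrix (Fin N) (Fin N) ℂ :=
    Matrix.of fun j k : Fin N => cbinomZ α ((m k : ℤ) - (N : ℤ) + (((j : ℕ) : ℤ) + 1)) with hB
  set C : Matrix (Fin N) (Fin N) ℂ :=
    Matrix.of fun j j' : Fin N => (Nat.choose (N - 1 - j) (N - 1 - j') : ℂ) with hC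
  have hfac : (Matrix.of fun j k : Fin N =>
      cbinom (α + (N : ℂ) - (((j : ℕ) : ℂ) + 1)) (m k)) = C * B := by
    ext j k
    have hj : (j : ℕ) < N := j.2
    have hcast : α + (N : ℂ) - (((j : ℕ) : ℂ) + 1) = α + ((N - 1 - (j : ℕ) : ℕ) : ℂ) := by
      have h1 : (N - 1 - (j : ℕ) : ℕ) = N - ((j : ℕ) + 1) := by omega
      have h2 : ((N - ((j : ℕ) + 1) : ℕ) : ℂ) = (N : ℂ) - (((j : ℕ) : ℂ) + 1) := by
        have : (j : ℕ) + 1 ≤ N := hj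
        push_cast [Nat.cast_sub this]
        ring
      rw [h1, h2]; ring
    rw [Matrix.mul_apply]
    simp only [Matrix.of_apply, hcast]
    rw [← cbinomZ_coe, cbinomZ_add_nat]
    have hsub : Finset.range (N - 1 - (j : ℕ) + 1) ⊆ Finset.range N := by
      intro x hx
      simp only [Finset.mem_range] at hx ⊢
      omega
    rw [Finset.sum_subset hsub (fun x _ hx => by
      have : N - 1 - (j : ℕ) < x := by
        simp only [Finset.mem_range, not_lt] at hx ⊢
        omega
      rw [Nat.choose_eq_zero_of_lt this]
      simp)]
    rw [← Fin.sum_univ_eq_sum_range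
      (fun i => (Nat.choose (N - 1 - (j : ℕ)) i : ℂ) * cbinomZ α ((m k : ℤ) - i)) N]
    refine Fintype.sum_equiv (Fin.revPerm) _ _ fun x => ?_
    simp only [Fin.revPerm_apply, Matrix.of_apply, hC, hB]
    have hx : (x : ℕ) < N := x.2
    have hrev : ((Fin.rev x : Fin N) : ℕ) = N - ((x : ℕ) + 1) := Fin.val_rev x
    have e1 : N - 1 - ((Fin.rev x : Fin N) : ℕ) = (x : ℕ) := by omega
    have e2 : (m k : ℤ) - (N : ℤ) + ((((Fin.rev x : Fin N) : ℕ) : ℤ) + 1) =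
        (m k : ℤ) - (((x : ℕ) : ℕ) : ℤ) := by omega
    rw [e1, e2]
  rw [hfac, Matrix.det_mul]
  have hCdet : C.det = 1 := by
    rw [Matrix.det_of_upperTriangular]
    · simp [hC]
    · intro i j hij
      simp only [hC, Matrix.of_apply]
      have : N - 1 - (i : ℕ) < N - 1 - (j : ℕ) := by
        have hi : (i : ℕ) < N := i.2
        have : (j : ℕ) < (i : ℕ) := hij
        omega
      rw [Nat.choose_eq_zero_of_lt this]
      simp
  rw [hCdet, one_mul]

end
end

section
/- Let (Ω, μ) be a measure space, let N ≥ 1, and let φ_1,…,φ_N, ψ_1,…,ψ_N : Ω → ℂ be measurable functions such that φ_j·ψ_k is μ-integrable for all j, k. Then ∫_{Ω^N} det[ φ_j(x_k) ]_{j,k=1}^N · det[ ψ_j(x_k) ]_{j,k=1}^N dμ(x_1)⋯dμ(x_N) = N! · det[ ∫_Ω φ_j(x) ψ_k(x) dμ(x) ]_{j,k=1}^N. -/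
open MeasureTheory Matrix Polynomial

noncomputable section

/-- Lemma B.1 (Andréief's integration formula). -/
theorem andreief_identity {Ω : Type*} [MeasurableSpace Ω] (μ : Measure Ω) [SigmaFinite μ]
    (N : ℕ) (hN : 1 ≤ N) (φ ψ : Fin N → Ω → ℂ)
    (hφ : ∀ j, Measurable (φ j)) (hψ : ∀ j, Measurable (ψ j))
    (hint : ∀ j k, Integrable (fun x => φ j x * ψ k x) μ) :
    (∫ x : Fin N → Ω,
        (Matrix.of fun j k : Fin N => φ j (x k)).det *
          (Matrix.of fun j k : Fin N => ψ j (x k)).det ∂(Measure.pi fun _ => μ)) =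
      (N.factorial : ℂ) * (Matrix.of fun j k : Fin N => ∫ x, φ j x * ψ k x ∂μ).det := by
  letI : MeasureSpace Ω := ⟨μ⟩
  haveI : SigmaFinite (volume : Measure Ω) := ‹SigmaFinite μ›
  have hvol : (Measure.pi fun _ : Fin N => μ) = (volume : Measure (Fin N → Ω)) := rfl
  set A : Matrix (Fin N) (Fin N) ℂ := Matrix.of fun j k : Fin N => ∫ x, φ j x * ψ k x ∂μ with hA
  have key : ∀ x : Fin N → Ω,
      (Matrix.of fun j k : Fin N => φ j (x k)).det *
        (Matrix.of fun j k : Fin N => ψ j (x k)).det =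
      ∑ p : Equiv.Perm (Fin N) × Equiv.Perm (Fin N),
        (((Equiv.Perm.sign p.1 : ℤ) : ℂ) * ((Equiv.Perm.sign p.2 : ℤ) : ℂ)) *
          ∏ k, (φ (p.1 k) (x k) * ψ (p.2 k) (x k)) := by
    intro x
    rw [Matrix.det_apply', Matrix.det_apply', Fintype.sum_mul_sum,
      ← Fintype.sum_prod_type']
    refine Finset.sum_congr rfl fun p _ => ?_
    rw [Finset.prod_mul_distrib]
    simp only [Matrix.of_apply]
    ring
  simp_rw [key, hvol]
  rw [integral_finset_sum]
  · have hterm : ∀ p : Equiv.Perm (Fin N) × Equiv.Perm (Fin N),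
        (∫ x : Fin N → Ω,
          (((Equiv.Perm.sign p.1 : ℤ) : ℂ) * ((Equiv.Perm.sign p.2 : ℤ) : ℂ)) *
            ∏ k, (φ (p.1 k) (x k) * ψ (p.2 k) (x k))) =
        (((Equiv.Perm.sign p.1 : ℤ) : ℂ) * ((Equiv.Perm.sign p.2 : ℤ) : ℂ)) *
          ∏ k, A (p.1 k) (p.2 k) := by
      intro p
      rw [integral_const_mul]
      congr 1
      have := MeasureTheory.integral_fintype_prod_eq_prod (ι := Fin N) (μ := fun _ => μ)
        (fun k (y : Ω) => φ (p.1 k) y * ψ (p.2 k) y)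
      rw [← hvol, this]
      rfl
    rw [Finset.sum_congr rfl fun p _ => hterm p]
    have inner : ∀ σ : Equiv.Perm (Fin N),
        (∑ τ : Equiv.Perm (Fin N),
          (((Equiv.Perm.sign σ : ℤ) : ℂ) * ((Equiv.Perm.sign τ : ℤ) : ℂ)) *
            ∏ k, A (σ k) (τ k)) = A.det := by
      intro σ
      have reidx : ∀ τ : Equiv.Perm (Fin N),
          (∏ k, A (σ k) (τ k)) = ∏ k, A k (τ (σ⁻¹ k)) := by
        intro τ
        rw [← Equiv.prod_comp σ (fun k => A k (τ (σ⁻¹ k)))]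
        simp
      simp_rw [reidx]
      rw [← Equiv.sum_comp (Equiv.mulRight σ)
        (fun τ : Equiv.Perm (Fin N) =>
          (((Equiv.Perm.sign σ : ℤ) : ℂ) * ((Equiv.Perm.sign τ : ℤ) : ℂ)) *
            ∏ k, A k (τ (σ⁻¹ k)))]
      have : ∀ ρ : Equiv.Perm (Fin N),
          (((Equiv.Perm.sign σ : ℤ) : ℂ) *
            ((Equiv.Perm.sign ((Equiv.mulRight σ) ρ) : ℤ) : ℂ)) *
            ∏ k, A k (((Equiv.mulRight σ) ρ) (σ⁻¹ k)) =
          ((Equiv.Perm.sign ρ : ℤ) : ℂ) * ∏ k, A k (ρ k) := by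
        intro ρ
        have h1 : ∀ k, ((Equiv.mulRight σ) ρ) (σ⁻¹ k) = ρ k := by
          intro k; simp [Equiv.Perm.mul_apply]
        have h2 : Equiv.Perm.sign ((Equiv.mulRight σ) ρ) =
            Equiv.Perm.sign ρ * Equiv.Perm.sign σ := by
          simp [Equiv.Perm.sign_mul]
        simp_rw [h1, h2]
        push_cast
        have h3 : ((Equiv.Perm.sign σ : ℤ) : ℂ) * ((Equiv.Perm.sign σ : ℤ) : ℂ) = 1 := by
          rcases Int.units_eq_one_or (Equiv.Perm.sign σ) with h | h <;> simp [h]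
        ring_nf
        ring_nf at h3
        rw [h3, one_mul, mul_comm]
      simp_rw [this]
      rw [← Matrix.det_transpose A, Matrix.det_apply']
      rfl
    refine Eq.trans (Fintype.sum_prod_type _) ?_
    refine Eq.trans (Finset.sum_congr rfl fun σ _ => inner σ) ?_
    rw [Finset.sum_const, Finset.card_univ, Fintype.card_perm, nsmul_eq_mul, Fintype.card_fin]
  · intro p _
    exact ((Integrable.fintype_prod
      (f := fun k (y : Ω) => φ (p.1 k) y * ψ (p.2 k) y)
      (fun k => hint (p.1 k) (p.2 k)))).const_mul _


end
end

section
/- Let N ≥ 1 and let α, β ∈ ℂ be such that α + β is not a negative integer. Then det[ Γ(α+β+1) · (1/Γ(β−j+k+1)) · (1/Γ(α+j−k+1)) ]_{j,k=1}^N = ∏_{j=1}^N (j−1)! · Γ(α+β+j) · (1/Γ(α+j)) · (1/Γ(β+j)). -/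
open MeasureTheory Matrix Polynomial

noncomputable section

private lemma fh_inv_Gamma_rec (z : ℂ) :
    (Complex.Gamma z)⁻¹ = z * (Complex.Gamma (z + 1))⁻¹ := by
  rcases eq_or_ne z 0 with h | h
  · simp [h, Complex.Gamma_zero]
  · rw [Complex.Gamma_add_one z h, mul_inv, ← mul_assoc, mul_inv_cancel₀ h, one_mul]

private lemma fh_rowop (α β i k : ℂ) (hq : α + i + 1 ≠ 0) :
    Complex.Gamma (α + β + 1) * (Complex.Gamma (β - (i + 1) + k + 1))⁻¹ *
      (Complex.Gamma (α + (i + 1) - k + 1))⁻¹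
    = k / (α + i + 1) *
        ((α + β + 1) * Complex.Gamma (α + β + 1) * (Complex.Gamma (β - i + k + 1))⁻¹ *
          (Complex.Gamma (α + i - k + 2))⁻¹)
      + (β - i) / (α + i + 1) *
        (Complex.Gamma (α + β + 1) * (Complex.Gamma (β - i + k + 1))⁻¹ *
          (Complex.Gamma (α + i - k + 1))⁻¹) := by
  rw [show β - (i + 1) + k + 1 = β - i + k by ring,
      show α + (i + 1) - k + 1 = α + i - k + 1 + 1 by ring,
      fh_inv_Gamma_rec (β - i + k), fh_inv_Gamma_rec (α + i - k + 1),
      show α + i - k + 1 + 1 = α + i - k + 2 by ring]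
  generalize (Complex.Gamma (β - i + k + 1))⁻¹ = a
  generalize (Complex.Gamma (α + i - k + 2))⁻¹ = b
  generalize Complex.Gamma (α + β + 1) = G
  field_simp
  ring

private lemma fh_core (n : ℕ) : ∀ (α β : ℂ), (∀ j : ℕ, α + (j : ℂ) + 1 ≠ 0) →
    (∀ m : ℕ, α + β + (m : ℂ) + 1 ≠ 0) →
    (Matrix.of fun j k : Fin n =>
        Complex.Gamma (α + β + 1) *
          (Complex.Gamma (β - ((j : ℕ) : ℂ) + ((k : ℕ) : ℂ) + 1))⁻¹ *
          (Complex.Gamma (α + ((j : ℕ) : ℂ) - ((k : ℕ) : ℂ) + 1))⁻¹).det =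
      ∏ j ∈ Finset.range n, (j.factorial : ℂ) * Complex.Gamma (α + β + j + 1) *
        (Complex.Gamma (α + j + 1))⁻¹ * (Complex.Gamma (β + j + 1))⁻¹ := by
  induction n with
  | zero =>
    intro α β _ _
    simp [Matrix.det_fin_zero]
  | succ n ih =>
    intro α β hα hs
    have h0 : α + β + 1 ≠ 0 := by simpa using hs 0
    set Bm : Matrix (Fin (n + 1)) (Fin (n + 1)) ℂ := Matrix.of fun i k =>
      (Fin.cases
        (Complex.Gamma (α + β + 1) * (Complex.Gamma (β + ((k : ℕ) : ℂ) + 1))⁻¹ *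
          (Complex.Gamma (α - ((k : ℕ) : ℂ) + 1))⁻¹)
        (fun j => ((k : ℕ) : ℂ) / (α + ((j : ℕ) : ℂ) + 1) *
          ((α + β + 1) * Complex.Gamma (α + β + 1) *
            (Complex.Gamma (β - ((j : ℕ) : ℂ) + ((k : ℕ) : ℂ) + 1))⁻¹ *
            (Complex.Gamma (α + ((j : ℕ) : ℂ) - ((k : ℕ) : ℂ) + 2))⁻¹))
        i : ℂ) with hBm
    have hdet1 : (Matrix.of fun j k : Fin (n + 1) =>
        Complex.Gamma (α + β + 1) *
          (Complex.Gamma (β - ((j : ℕ) : ℂ) + ((k : ℕ) : ℂ) + 1))⁻¹ *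
          (Complex.Gamma (α + ((j : ℕ) : ℂ) - ((k : ℕ) : ℂ) + 1))⁻¹).det = Bm.det := by
      refine Matrix.det_eq_of_forall_row_eq_smul_add_pred
        (c := fun i => (β - ((i : ℕ) : ℂ)) / (α + ((i : ℕ) : ℂ) + 1)) (fun k => ?_) (fun i k => ?_)
      · simp only [hBm, Matrix.of_apply, Fin.cases_zero, Fin.val_zero, Nat.cast_zero]
        ring_nf
      · simp only [hBm, Matrix.of_apply, Fin.cases_succ, Fin.val_succ, Fin.coe_castSucc]
        push_cast
        linear_combination fh_rowop α β ((i : ℕ) : ℂ) ((k : ℕ) : ℂ) (hα i)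
    have hdet2 : Bm.det = Bm 0 0 * (Bm.submatrix Fin.succ Fin.succ).det := by
      rw [Matrix.det_succ_column_zero, Finset.sum_eq_single 0]
      · simp
      · intro b _ hb
        obtain ⟨j, rfl⟩ := Fin.exists_succ_eq_of_ne_zero hb
        simp [hBm]
      · intro h
        exact absurd (Finset.mem_univ 0) h
    have hsub : Bm.submatrix Fin.succ Fin.succ =
        Matrix.of (fun j k : Fin n => (α + ((j : ℕ) : ℂ) + 1)⁻¹ *
          ((Matrix.of (fun j k : Fin n => (((k : ℕ) : ℂ) + 1) *
            ((Matrix.of (fun j k : Fin n =>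
              Complex.Gamma (α + (β + 1) + 1) *
                (Complex.Gamma ((β + 1) - ((j : ℕ) : ℂ) + ((k : ℕ) : ℂ) + 1))⁻¹ *
                (Complex.Gamma (α + ((j : ℕ) : ℂ) - ((k : ℕ) : ℂ) + 1))⁻¹)) j k))) j k)) := by
      ext j k
      simp only [hBm, Matrix.submatrix_apply, Matrix.of_apply, Fin.cases_succ, Fin.val_succ]
      push_cast
      rw [show α + (β + 1) + 1 = (α + β + 1) + 1 by ring, Complex.Gamma_add_one _ h0,
          show (β + 1) - ((j : ℕ) : ℂ) + ((k : ℕ) : ℂ) + 1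
            = β - ((j : ℕ) : ℂ) + (((k : ℕ) : ℂ) + 1) + 1 by ring,
          show α + ((j : ℕ) : ℂ) - ((k : ℕ) : ℂ) + 1
            = α + ((j : ℕ) : ℂ) - (((k : ℕ) : ℂ) + 1) + 2 by ring]
      ring
    rw [hdet1, hdet2, hsub, Matrix.det_mul_column, Matrix.det_mul_row,
        ih α (β + 1) hα (fun m h => hs (m + 1) (by push_cast at h ⊢; linear_combination h))]
    have hB00 : Bm 0 0 = Complex.Gamma (α + β + 1) * (Complex.Gamma (β + 1))⁻¹ *
        (Complex.Gamma (α + 1))⁻¹ := by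
      simp [hBm]
    rw [hB00, Fin.prod_univ_eq_prod_range (fun i => (α + (i : ℂ) + 1)⁻¹) n,
        Fin.prod_univ_eq_prod_range (fun i => ((i : ℂ) + 1)) n,
        Finset.prod_range_succ' _ n, ← Finset.prod_mul_distrib, ← Finset.prod_mul_distrib]
    have hpt : ∀ j ∈ Finset.range n,
        (α + (j : ℂ) + 1)⁻¹ * (((j : ℂ) + 1) *
          ((j.factorial : ℂ) * Complex.Gamma (α + (β + 1) + j + 1) *
            (Complex.Gamma (α + j + 1))⁻¹ * (Complex.Gamma ((β + 1) + j + 1))⁻¹))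
        = ((j + 1).factorial : ℂ) * Complex.Gamma (α + β + ((j : ℕ) + 1 : ℕ) + 1) *
            (Complex.Gamma (α + ((j : ℕ) + 1 : ℕ) + 1))⁻¹ *
            (Complex.Gamma (β + ((j : ℕ) + 1 : ℕ) + 1))⁻¹ := by
      intro j _
      have hj : α + (j : ℂ) + 1 ≠ 0 := hα j
      push_cast [Nat.factorial_succ]
      rw [show α + β + ((j : ℂ) + 1) + 1 = α + (β + 1) + (j : ℂ) + 1 by ring,
          show β + ((j : ℂ) + 1) + 1 = β + 1 + (j : ℂ) + 1 by ring,
          show α + ((j : ℂ) + 1) + 1 = (α + (j : ℂ) + 1) + 1 by ring,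
          fh_inv_Gamma_rec (α + (j : ℂ) + 1)]
      generalize (Complex.Gamma (α + (j : ℂ) + 1 + 1))⁻¹ = a
      generalize (Complex.Gamma (β + 1 + (j : ℂ) + 1))⁻¹ = b
      generalize Complex.Gamma (α + (β + 1) + (j : ℂ) + 1) = G
      field_simp
    rw [Finset.prod_congr rfl hpt]
    push_cast [Nat.factorial_zero]
    rw [mul_comm]
    simp only [add_zero, one_mul]
    ring

/-- Equality of (B.4) and (B.5): Toeplitz determinant of binomial symbols in closed form. -/
theorem fisher_hartwig_toeplitz_det (N : ℕ) (hN : 1 ≤ N) (α β : ℂ)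
    (hαβ : ∀ n : ℕ, α + β ≠ -((n : ℂ) + 1)) :
    (Matrix.of fun j k : Fin N =>
        Complex.Gamma (α + β + 1) *
          (Complex.Gamma (β - ((j : ℕ) : ℂ) + ((k : ℕ) : ℂ) + 1))⁻¹ *
          (Complex.Gamma (α + ((j : ℕ) : ℂ) - ((k : ℕ) : ℂ) + 1))⁻¹).det =
      ∏ j ∈ Finset.range N, (j.factorial : ℂ) * Complex.Gamma (α + β + j + 1) *
        (Complex.Gamma (α + j + 1))⁻¹ * (Complex.Gamma (β + j + 1))⁻¹ := by
  by_cases hα : ∀ j : ℕ, α + (j : ℂ) + 1 ≠ 0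
  · exact fh_core N α β hα (fun m h => hαβ m (by linear_combination h))
  · push_neg at hα
    obtain ⟨a, ha⟩ := hα
    have hβ : ∀ j : ℕ, β + (j : ℂ) + 1 ≠ 0 := by
      intro j h
      exact hαβ (a + j + 1) (by push_cast; linear_combination ha + h)
    have hs : ∀ m : ℕ, β + α + (m : ℂ) + 1 ≠ 0 := fun m h =>
      hαβ m (by linear_combination h)
    rw [← Matrix.det_transpose]
    have ht : (Matrix.of fun j k : Fin N =>
        Complex.Gamma (α + β + 1) *
          (Complex.Gamma (β - ((j : ℕ) : ℂ) + ((k : ℕ) : ℂ) + 1))⁻¹ *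
          (Complex.Gamma (α + ((j : ℕ) : ℂ) - ((k : ℕ) : ℂ) + 1))⁻¹)ᵀ =
        (Matrix.of fun j k : Fin N =>
        Complex.Gamma (β + α + 1) *
          (Complex.Gamma (α - ((j : ℕ) : ℂ) + ((k : ℕ) : ℂ) + 1))⁻¹ *
          (Complex.Gamma (β + ((j : ℕ) : ℂ) - ((k : ℕ) : ℂ) + 1))⁻¹) := by
      ext j k
      simp only [Matrix.transpose_apply, Matrix.of_apply]
      rw [show α + β + 1 = β + α + 1 by ring,
          show β - ((k : ℕ) : ℂ) + ((j : ℕ) : ℂ) + 1 = β + ((j : ℕ) : ℂ) - ((k : ℕ) : ℂ) + 1 by ring,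
          show α + ((k : ℕ) : ℂ) - ((j : ℕ) : ℂ) + 1 = α - ((j : ℕ) : ℂ) + ((k : ℕ) : ℂ) + 1 by ring]
      ring
    rw [ht, fh_core N β α hβ hs]
    refine Finset.prod_congr rfl fun j _ => ?_
    rw [show β + α + (j : ℂ) + 1 = α + β + (j : ℂ) + 1 by ring]
    ring

end
end
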